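/- arXiv:1408.2786 — 3 statements merged into one kernel-verified Lean document; each statement's English description precedes it below -/
import Mathlib

section
/- Recursion for the closed-form polynomials t_A (Proposition 3.2): for a finite set A of positive integers define t_A = 1 if |A| = 1, and t_A = x_{m}·y_{M,M}·∏_{i ∈ A∖{m,M}}( y_{i,i}·∑_{j∈A, j≤i} x_j + x_i·∑_{j∈A, j>i} y_{i,j} ) if |A| ≥ 2, where m = min(A), M = max(A). Then for |A| ≥ 2 and any fixed a ∈ A∖{m}: t_A = ∑ over pairs (B,C) with B ⊔ C = A, m ∈ C, a ∈ B, of x_m·(∑_{j∈B} y_{min(B),j})·t_B·t_C. -/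
/-!
Give the arc `i → j` the weight `w(i, j) = y_{ii} x_j` if `j ≤ i` and `x_i y_{ij}` if `i < j`,
and write `out_V(i) = ∑_{j ∈ V} w(i, j)`. A product `∏_{i ∈ V ∖ S} out_V(i)` is the total weight
of the maps `V ∖ S → V`; sorting the points of such a map by whether their orbit reaches a root
`z` splits it into a spanning tree rooted at `z` and a map on the remaining points.

The core is the tree formula: the spanning trees of `V` rooted at `m = min V` have total weight
`t_V`. Given it for proper subsets, the splitting at `m` makes it equivalent to
`∏_{i ∈ V ∖ {m}} out_V(i) = ∑_{B ⊆ V ∖ {m}} (∏_{i ∈ B} out_B(i)) t_{V ∖ B}`. To prove this,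
remove `M = max V`: each out-sum becomes `x_i y_{iM} + out_{V ∖ {M}}(i)`, and after expanding,
both sides agree by the splitting inside `V ∖ {M}`.

With `X_A = ∑_{j ∈ A} x_j` and `m = min A`, multiplying by `X_A` expands both `t_A` and the
right-hand side `r_A` of the recursion into the same sums over smaller sets, up to the summands
`x_m t_A` and `x_m r_A`. By induction on `|A|` this gives `X_{A ∖ {m}} (t_A - r_A) = 0`. The
identity is polynomial, so it suffices to prove it for indeterminates over `ℤ`, where
`X_{A ∖ {m}}` can be cancelled.
-/

/-- The minimum of a finite set of naturals (`0` for the empty set). -/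
def fmin (B : Finset ℕ) : ℕ := WithTop.untopD 0 B.min

/-- The maximum of a finite set of naturals (`0` for the empty set). -/
def fmax (B : Finset ℕ) : ℕ := WithBot.unbotD 0 B.max

/-- The closed-form polynomial `t_A`: `t_A = 1` if `|A| ≤ 1`, and otherwise
`t_A = x_m y_{M,M} ∏_{i ∈ A∖{m,M}}(y_{i,i} ∑_{j∈A, j≤i} x_j + x_i ∑_{j∈A, j>i} y_{i,j})`
with `m = min A`, `M = max A`. -/
noncomputable def tA {R : Type*} [CommRing R] (x : ℕ → R) (y : ℕ → ℕ → R) (A : Finset ℕ) : R :=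
  if 2 ≤ A.card then
    x (fmin A) * y (fmax A) (fmax A) *
      ∏ i ∈ A.filter (fun i => i ≠ fmin A ∧ i ≠ fmax A),
        (y i i * ∑ j ∈ A.filter (fun j => j ≤ i), x j
          + x i * ∑ j ∈ A.filter (fun j => i < j), y i j)
  else 1

open Finset

namespace TARecursion

noncomputable section

section Maps

variable {α : Type*}

def Reaches (g : α → α) (i r : α) : Prop := ∃ n, g^[n] i = r

theorem Reaches.refl (g : α → α) (r : α) : Reaches g r r := ⟨0, rfl⟩

theorem Reaches.of_apply {g : α → α} {i r : α} (h : Reaches g (g i) r) : Reaches g i r :=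
  let ⟨n, hn⟩ := h; ⟨n + 1, hn⟩

theorem Reaches.apply {g : α → α} {i r : α} (h : Reaches g i r) (hir : i ≠ r) :
    Reaches g (g i) r := by
  obtain ⟨_ | n, hn⟩ := h
  · exact absurd hn hir
  · exact ⟨n, hn⟩

theorem not_reaches_of_mapsTo {g : α → α} {t : Set α} {i r : α} (hg : Set.MapsTo g t t)
    (hi : i ∈ t) (hr : r ∉ t) : ¬ Reaches g i r :=
  fun ⟨n, hn⟩ => hr (hn ▸ hg.iterate n hi)

theorem reaches_iff_of_eqOn {g g' : α → α} {t : Set α} {i r : α} (hg : Set.MapsTo g t t)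
    (hgg' : Set.EqOn g g' t) (hi : i ∈ t) : Reaches g i r ↔ Reaches g' i r := by
  have key : ∀ n, ∀ j ∈ t, g^[n] j = g'^[n] j := by
    intro n
    induction n with
    | zero => exact fun _ _ => rfl
    | succ n ih =>
      intro j hj
      rw [Function.iterate_succ_apply, Function.iterate_succ_apply, ← hgg' hj, ih _ (hg hj)]
  exact exists_congr fun n => by rw [key n i hi]

open scoped Classical in
def reachSet (s : Finset α) (g : α → α) (z : α) : Finset α := s.filter fun i => Reaches g i z

theorem mem_reachSet {s : Finset α} {g : α → α} {z i : α} :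
    i ∈ reachSet s g z ↔ i ∈ s ∧ Reaches g i z := by
  classical
  rw [reachSet, mem_filter]

variable [DecidableEq α]

open scoped Classical in
/-- Maps `s → V`, encoded as the functions that fix every point outside `s`. -/
def mapsOn (s V : Finset α) : Finset (α → α) :=
  (s.pi fun _ => V).image fun p i => if h : i ∈ s then p i h else i

theorem mem_mapsOn {s V : Finset α} {g : α → α} :
    g ∈ mapsOn s V ↔ (∀ i ∈ s, g i ∈ V) ∧ ∀ i ∉ s, g i = i := by
  classical
  constructor
  · intro hg
    obtain ⟨p, hp, rfl⟩ := mem_image.1 hg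
    exact ⟨fun i hi => by simpa [dif_pos hi] using mem_pi.1 hp i hi,
      fun i hi => by simp [dif_neg hi]⟩
  · rintro ⟨hV, hid⟩
    refine mem_image.2 ⟨fun i _ => g i, mem_pi.2 hV, funext fun i => ?_⟩
    by_cases hi : i ∈ s
    · exact dif_pos hi
    · rw [dif_neg hi, hid i hi]

variable {s V D : Finset α} {z : α} {g g₁ g₂ : α → α}

theorem reaches_piecewise_iff (hzD : z ∉ D) (hg₁z : g₁ z = z) (hg₂z : g₂ z = z)
    (hg₁ : ∀ i ∈ D, g₁ i ∈ insert z D) {i : α} (hi : i ∈ insert z D) :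
    Reaches (D.piecewise g₁ g₂) i z ↔ Reaches g₁ i z := by
  refine (reaches_iff_of_eqOn (t := ↑(insert z D)) ?_ ?_ hi).symm
  · intro j hj
    rcases mem_insert.1 hj with rfl | hj
    · rw [hg₁z]; exact mem_insert_self _ _
    · exact hg₁ j hj
  · intro j hj
    rcases mem_insert.1 hj with rfl | hj
    · rw [piecewise_eq_of_notMem _ _ _ hzD, hg₁z, hg₂z]
    · rw [piecewise_eq_of_mem _ _ _ hj]

theorem mapsTo_insert_of_reachSet_eq (hg : g ∈ mapsOn s V) (hzs : z ∉ s)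
    (hgD : reachSet s g z = D) : ∀ i ∈ D, g i ∈ insert z D := by
  rw [mem_mapsOn] at hg
  intro i hi
  obtain ⟨his, hreach⟩ := mem_reachSet.1 (hgD ▸ hi)
  have hgi : Reaches g (g i) z := hreach.apply (ne_of_mem_of_not_mem his hzs)
  by_cases hgis : g i ∈ s
  · exact mem_insert_of_mem (hgD ▸ mem_reachSet.2 ⟨hgis, hgi⟩)
  · by_contra hgiz
    have hfix : Set.MapsTo g {g i} {g i} := fun j hj => by
      rw [Set.mem_singleton_iff.1 hj, hg.2 _ hgis]; rfl
    exact not_reaches_of_mapsTo hfix rfl (fun h => hgiz (h ▸ mem_insert_self _ _)) hgi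

theorem mapsTo_compl_of_reachSet_eq (hg : g ∈ mapsOn s V) (hgD : reachSet s g z = D) :
    ∀ i ∈ s \ D, g i ∈ V \ insert z D := by
  intro i hi
  obtain ⟨his, hiD⟩ := mem_sdiff.1 hi
  refine mem_sdiff.2 ⟨(mem_mapsOn.1 hg).1 i his, fun hgi => hiD ?_⟩
  refine hgD ▸ mem_reachSet.2 ⟨his, Reaches.of_apply ?_⟩
  rcases mem_insert.1 hgi with h | h
  · exact h ▸ Reaches.refl g z
  · exact (mem_reachSet.1 (hgD ▸ h)).2

theorem reaches_piecewise_id_of_reachSet_eq (hg : g ∈ mapsOn s V) (hzs : z ∉ s)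
    (hgD : reachSet s g z = D) : ∀ i ∈ insert z D, Reaches (D.piecewise g id) i z := by
  intro i hi
  have hzD : z ∉ D := fun h => hzs (mem_reachSet.1 (hgD ▸ h)).1
  rw [reaches_piecewise_iff hzD ((mem_mapsOn.1 hg).2 z hzs) rfl
    (mapsTo_insert_of_reachSet_eq hg hzs hgD) hi]
  rcases mem_insert.1 hi with rfl | hi
  · exact Reaches.refl g i
  · exact (mem_reachSet.1 (hgD ▸ hi)).2

theorem piecewise_mem_mapsOn (hz : z ∈ V) (hsV : s ⊆ V) (hDs : D ⊆ s)
    (hg₁ : g₁ ∈ mapsOn D (insert z D)) (hg₂ : g₂ ∈ mapsOn (s \ D) (V \ insert z D)) :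
    D.piecewise g₁ g₂ ∈ mapsOn s V := by
  rw [mem_mapsOn] at hg₁ hg₂ ⊢
  refine ⟨fun i hi => ?_, fun i hi => ?_⟩
  · by_cases hiD : i ∈ D
    · rw [piecewise_eq_of_mem _ _ _ hiD]
      exact insert_subset hz (hDs.trans hsV) (hg₁.1 i hiD)
    · rw [piecewise_eq_of_notMem _ _ _ hiD]
      exact (mem_sdiff.1 (hg₂.1 i (mem_sdiff.2 ⟨hi, hiD⟩))).1
  · rw [piecewise_eq_of_notMem _ _ _ fun h => hi (hDs h)]
    exact hg₂.2 i fun h => hi (mem_sdiff.1 h).1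

theorem reachSet_piecewise (hzs : z ∉ s) (hDs : D ⊆ s) (hg₁ : g₁ ∈ mapsOn D (insert z D))
    (htree : ∀ i ∈ insert z D, Reaches g₁ i z)
    (hg₂ : g₂ ∈ mapsOn (s \ D) (V \ insert z D)) :
    reachSet s (D.piecewise g₁ g₂) z = D := by
  rw [mem_mapsOn] at hg₁ hg₂
  have hzD : z ∉ D := fun h => hzs (hDs h)
  ext i
  rw [mem_reachSet]
  constructor
  · rintro ⟨his, hreach⟩
    by_contra hiD
    have hout : Set.MapsTo (D.piecewise g₁ g₂) (↑(insert z D))ᶜ (↑(insert z D))ᶜ := by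
      intro j hj
      have hjD : j ∉ D := fun h => hj (mem_insert_of_mem h)
      simp only [Set.mem_compl_iff, mem_coe, piecewise_eq_of_notMem _ _ _ hjD]
      by_cases hjs : j ∈ s \ D
      · exact (mem_sdiff.1 (hg₂.1 j hjs)).2
      · rwa [hg₂.2 j hjs]
    refine not_reaches_of_mapsTo hout ?_ (by simp) hreach
    simp [ne_of_mem_of_not_mem his hzs, hiD]
  · intro hiD
    refine ⟨hDs hiD, (reaches_piecewise_iff hzD (hg₁.2 z hzD) (hg₂.2 z ?_) hg₁.1
      (mem_insert_of_mem hiD)).2 (htree i (mem_insert_of_mem hiD))⟩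
    exact fun h => hzs (mem_sdiff.1 h).1

end Maps

section Reindex

variable {α : Type*} [DecidableEq α] {M : Type*} [AddCommMonoid M]

theorem sum_powerset_sdiff (W : Finset α) (f : Finset α → M) :
    ∑ B ∈ W.powerset, f (W \ B) = ∑ B ∈ W.powerset, f B :=
  sum_nbij' (W \ ·) (W \ ·) (fun _ _ => mem_powerset.2 sdiff_subset)
    (fun _ _ => mem_powerset.2 sdiff_subset)
    (fun _ hB => Finset.sdiff_sdiff_eq_self (mem_powerset.1 hB))
    (fun _ hB => Finset.sdiff_sdiff_eq_self (mem_powerset.1 hB)) fun _ _ => rfl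

theorem sum_powerset_sum_powerset_sdiff_comm (U : Finset α) (F : Finset α → Finset α → M) :
    ∑ D ∈ U.powerset, ∑ C ∈ (U \ D).powerset, F D C
      = ∑ C ∈ U.powerset, ∑ D ∈ (U \ C).powerset, F D C := by
  refine sum_comm' fun D C => ?_
  simp only [mem_powerset, subset_sdiff]
  exact ⟨fun ⟨h₁, h₂, h₃⟩ => ⟨⟨h₁, h₃.symm⟩, h₂⟩, fun ⟨⟨h₁, h₃⟩, h₂⟩ => ⟨h₁, h₂, h₃.symm⟩⟩

theorem sum_powerset_sum_powerset_eq_sum_sdiff (U : Finset α) (F : Finset α → Finset α → M) :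
    ∑ B ∈ U.powerset, ∑ D ∈ B.powerset, F B D
      = ∑ D ∈ U.powerset, ∑ C ∈ (U \ D).powerset, F (D ∪ C) D := by
  rw [sum_comm' (t' := U.powerset) (s' := fun D => U.powerset.filter (D ⊆ ·))]
  · refine sum_congr rfl fun D hD => ?_
    have hDU := mem_powerset.1 hD
    refine sum_nbij' (· \ D) (D ∪ ·) ?_ ?_ ?_ ?_ ?_
    · intro B hB
      exact mem_powerset.2 (sdiff_subset_sdiff (mem_powerset.1 (mem_filter.1 hB).1) subset_rfl)
    · intro C hC
      exact mem_filter.2 ⟨mem_powerset.2 (union_subset hDU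
        ((mem_powerset.1 hC).trans sdiff_subset)), subset_union_left⟩
    · intro B hB
      exact union_sdiff_of_subset (mem_filter.1 hB).2
    · intro C hC
      exact union_sdiff_cancel_left (subset_sdiff.1 (mem_powerset.1 hC)).2.symm
    · intro B hB
      rw [union_sdiff_of_subset (mem_filter.1 hB).2]
  · simp only [mem_powerset, mem_filter]
    exact fun B D => ⟨fun ⟨h₁, h₂⟩ => ⟨⟨h₁, h₂⟩, h₂.trans h₁⟩, fun ⟨⟨h₁, h₂⟩, _⟩ => ⟨h₁, h₂⟩⟩

theorem sum_filter_mem_notMem_eq_sum_insert {A : Finset α} {a m : α} (ha : a ∈ A) (ham : a ≠ m)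
    (f : Finset α → M) :
    ∑ B ∈ A.powerset.filter (fun B => a ∈ B ∧ m ∉ B), f B
      = ∑ B ∈ (A \ {m, a}).powerset, f (insert a B) := by
  symm
  refine sum_nbij' (insert a ·) (·.erase a) ?_ ?_ ?_ ?_ fun _ _ => rfl
  · intro B hB
    have hB := mem_powerset.1 hB
    simp only [mem_filter, mem_powerset, mem_insert_self, true_and, mem_insert, not_or]
    refine ⟨insert_subset ha (hB.trans sdiff_subset), Ne.symm ham, fun h => ?_⟩
    simpa using hB h
  · intro B hB
    simp only [mem_filter, mem_powerset] at hB
    simp only [mem_powerset]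
    intro i hi
    have := hB.1 (mem_of_mem_erase hi)
    simp only [mem_erase] at hi
    simp only [mem_sdiff, mem_insert, mem_singleton, not_or]
    exact ⟨this, fun h => hB.2.2 (h ▸ hi.2), hi.1⟩
  · intro B hB
    exact erase_insert fun h => by simpa using mem_powerset.1 hB h
  · intro B hB
    exact insert_erase (mem_filter.1 hB).2.1

end Reindex

section Weights

variable {α : Type*} [DecidableEq α] {R : Type*} [CommSemiring R] (w : α → α → R)

def outSum (V : Finset α) (i : α) : R := ∑ j ∈ V, w i j

def mapSum (V S : Finset α) : R := ∏ i ∈ V \ S, outSum w V i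

def mapWeight (s : Finset α) (g : α → α) : R := ∏ i ∈ s, w i (g i)

open scoped Classical in
/-- Spanning trees of `D` rooted at `r`: maps `D ∖ {r} → D` along which every point reaches `r`. -/
def treeSum (D : Finset α) (r : α) : R :=
  ∑ g ∈ (mapsOn (D.erase r) D).filter (fun g => ∀ i ∈ D, Reaches g i r),
    mapWeight w (D.erase r) g

theorem prod_outSum_eq_sum_mapWeight (s V : Finset α) :
    ∏ i ∈ s, outSum w V i = ∑ g ∈ mapsOn s V, mapWeight w s g := by
  classical
  simp only [outSum]
  rw [prod_sum, mapsOn, sum_image]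
  · refine sum_congr rfl fun p _ => ?_
    rw [mapWeight, ← prod_attach s]
    exact prod_congr rfl fun i _ => by rw [dif_pos i.2]
  · intro p _ q _ hpq
    funext i hi
    simpa [dif_pos hi] using congrFun hpq i

theorem mapWeight_piecewise_of_subset {s t : Finset α} (hts : t ⊆ s) (f g : α → α) :
    mapWeight w t (s.piecewise f g) = mapWeight w t f :=
  prod_congr rfl fun i hi => by rw [piecewise_eq_of_mem _ _ _ (hts hi)]

theorem sum_mapWeight_reachSet_eq {s V D : Finset α} {z : α} (hz : z ∈ V) (hsV : s ⊆ V)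
    (hzs : z ∉ s) (hDs : D ⊆ s) :
    ∑ g ∈ mapsOn s V with reachSet s g z = D, mapWeight w s g
      = treeSum w (insert z D) z *
          ∑ g ∈ mapsOn (s \ D) (V \ insert z D), mapWeight w (s \ D) g := by
  classical
  have hzD : z ∉ D := fun h => hzs (hDs h)
  rw [treeSum, erase_insert hzD, sum_mul_sum, ← sum_product']
  -- a map in the fiber is glued from a tree on `insert z D` and a map `s \ D → V \ insert z D`
  refine sum_nbij' (fun g => (D.piecewise g id, (s \ D).piecewise g id))
    (fun p => D.piecewise p.1 p.2) ?_ ?_ ?_ ?_ ?_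
  · intro g hg
    obtain ⟨hgs, hgD⟩ := mem_filter.1 hg
    have hmaps := mapsTo_insert_of_reachSet_eq hgs hzs hgD
    have hcompl := mapsTo_compl_of_reachSet_eq hgs hgD
    simp only [mem_product, mem_filter, mem_mapsOn]
    exact ⟨⟨⟨fun i hi => by simpa [hi] using hmaps i hi, fun i hi => by simp [hi]⟩,
      reaches_piecewise_id_of_reachSet_eq hgs hzs hgD⟩,
      fun i hi => by simpa [hi] using hcompl i hi, fun i hi => by simp [hi]⟩
  · rintro ⟨g₁, g₂⟩ hp
    obtain ⟨hp₁, hg₂⟩ := mem_product.1 hp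
    obtain ⟨hg₁, htree⟩ := mem_filter.1 hp₁
    exact mem_filter.2 ⟨piecewise_mem_mapsOn hz hsV hDs hg₁ hg₂,
      reachSet_piecewise hzs hDs hg₁ htree hg₂⟩
  · intro g hg
    have hgs := (mem_mapsOn.1 (mem_filter.1 hg).1).2
    funext i
    by_cases hiD : i ∈ D
    · simp [hiD]
    by_cases his : i ∈ s
    · simp [hiD, his]
    · simp [hiD, his, hgs i his]
  · rintro ⟨g₁, g₂⟩ hp
    simp only [mem_product, mem_filter, mem_mapsOn] at hp
    obtain ⟨⟨⟨-, hg₁⟩, -⟩, -, hg₂⟩ := hp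
    refine Prod.ext (funext fun i => ?_) (funext fun i => ?_)
    · by_cases hiD : i ∈ D
      · simp [hiD]
      · simp [hiD, hg₁ i hiD]
    · by_cases hi : i ∈ s \ D
      · simp [hi, (mem_sdiff.1 hi).2]
      · simp [hi, hg₂ i hi]
  · intro g _
    rw [mapWeight, ← prod_sdiff hDs, mul_comm]
    exact congrArg₂ (· * ·) (mapWeight_piecewise_of_subset w subset_rfl g id).symm
      (mapWeight_piecewise_of_subset w subset_rfl g id).symm

theorem mapSum_insert_eq_sum_treeSum {V S : Finset α} {z : α} (hz : z ∈ V) :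
    mapSum w V (insert z S) = ∑ D ∈ (V \ insert z S).powerset,
      treeSum w (insert z D) z * mapSum w (V \ insert z D) S := by
  set s := V \ insert z S with hs
  have hzs : z ∉ s := by simp [hs]
  rw [mapSum, prod_outSum_eq_sum_mapWeight, ← sum_fiberwise_of_maps_to (g := (reachSet s · z))
    (t := s.powerset) fun g _ => mem_powerset.2 fun i hi => (mem_reachSet.1 hi).1]
  refine sum_congr rfl fun D hD => ?_
  have hDs := mem_powerset.1 hD
  have hcompl : (V \ insert z D) \ S = s \ D := by
    ext i
    simp only [hs, mem_sdiff, mem_insert]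
    tauto
  rw [sum_mapWeight_reachSet_eq w hz sdiff_subset hzs hDs, mapSum, hcompl,
    prod_outSum_eq_sum_mapWeight]

theorem mapSum_insert_eq_sum_mapSum_mul_treeSum {V Z : Finset α} {m : α} (hm : m ∈ V)
    (hmZ : m ∉ Z) (hZV : Z ⊆ V) :
    mapSum w V (insert m Z) = ∑ B ∈ (V \ insert m Z).powerset,
      mapSum w (Z ∪ B) Z * treeSum w (V \ (Z ∪ B)) m := by
  rw [mapSum_insert_eq_sum_treeSum w hm, ← sum_powerset_sdiff]
  refine sum_congr rfl fun B hB => ?_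
  have hB := mem_powerset.1 hB
  have hinsert : insert m ((V \ insert m Z) \ B) = V \ (Z ∪ B) := by
    ext i
    by_cases him : i = m
    · subst him
      have := @hB i
      simp_all
    · simp [him]
      tauto
  rw [hinsert, Finset.sdiff_sdiff_eq_self (union_subset hZV (hB.trans sdiff_subset)), mul_comm]

end Weights

section MinMax

variable {V : Finset ℕ}

theorem fmin_eq_min' (h : V.Nonempty) : fmin V = V.min' h := by
  rw [fmin, ← coe_min' h, WithTop.untopD_coe]

theorem fmax_eq_max' (h : V.Nonempty) : fmax V = V.max' h := by
  rw [fmax, ← coe_max' h, WithBot.unbotD_coe]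

theorem fmin_mem (h : V.Nonempty) : fmin V ∈ V := fmin_eq_min' h ▸ V.min'_mem h

theorem fmax_mem (h : V.Nonempty) : fmax V ∈ V := fmax_eq_max' h ▸ V.max'_mem h

theorem fmin_le {i : ℕ} (hi : i ∈ V) : fmin V ≤ i :=
  fmin_eq_min' ⟨i, hi⟩ ▸ V.min'_le i hi

theorem le_fmax {i : ℕ} (hi : i ∈ V) : i ≤ fmax V :=
  fmax_eq_max' ⟨i, hi⟩ ▸ V.le_max' i hi

theorem fmin_eq_of_forall_le {m : ℕ} (hm : m ∈ V) (h : ∀ i ∈ V, m ≤ i) : fmin V = m :=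
  (fmin_le hm).antisymm (h _ (fmin_mem ⟨m, hm⟩))

theorem fmax_eq_of_forall_le {M : ℕ} (hM : M ∈ V) (h : ∀ i ∈ V, i ≤ M) : fmax V = M :=
  (h _ (fmax_mem ⟨M, hM⟩)).antisymm (le_fmax hM)

theorem fmin_lt_fmax (h : 2 ≤ V.card) : fmin V < fmax V := by
  have hV : V.Nonempty := card_pos.1 (by omega)
  rw [fmin_eq_min' hV, fmax_eq_max' hV]
  exact min'_lt_max'_of_card V h

end MinMax

section ArcWeight

variable {R : Type*} [CommSemiring R] (x : ℕ → R) (y : ℕ → ℕ → R)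

def arcWeight (i j : ℕ) : R := if j ≤ i then y i i * x j else x i * y i j

def xSum (S : Finset ℕ) : R := ∑ j ∈ S, x j

variable {x y} {W : Finset ℕ} {M : ℕ}

theorem outSum_arcWeight (V : Finset ℕ) (i : ℕ) :
    outSum (arcWeight x y) V i = y i i * ∑ j ∈ V.filter (fun j => j ≤ i), x j
      + x i * ∑ j ∈ V.filter (fun j => i < j), y i j := by
  simp only [outSum, mul_sum, sum_filter, ← sum_add_distrib, arcWeight]
  refine sum_congr rfl fun j _ => ?_
  by_cases hji : j ≤ i
  · simp [hji, not_lt.2 hji]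
  · simp [hji, not_le.1 hji]

theorem outSum_of_forall_le {V : Finset ℕ} {c : ℕ} (hc : ∀ i ∈ V, i ≤ c) :
    outSum (arcWeight x y) V c = y c c * xSum x V := by
  rw [outSum, xSum, mul_sum]
  exact sum_congr rfl fun j hj => by rw [arcWeight, if_pos (hc j hj)]

theorem outSum_fmin {V : Finset ℕ} :
    outSum (arcWeight x y) V (fmin V) = x (fmin V) * ∑ j ∈ V, y (fmin V) j := by
  rw [outSum, mul_sum]
  refine sum_congr rfl fun j hj => ?_
  rcases (fmin_le hj).eq_or_lt with h | h
  · rw [← h, arcWeight, if_pos le_rfl, mul_comm]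
  · rw [arcWeight, if_neg (not_le.2 h)]

theorem outSum_insert_of_lt {V : Finset ℕ} {i c : ℕ} (hc : c ∉ V) (hic : i < c) :
    outSum (arcWeight x y) (insert c V) i = x i * y i c + outSum (arcWeight x y) V i := by
  rw [outSum, sum_insert hc, arcWeight, if_neg (not_le.2 hic), outSum]

theorem prod_outSum_insert_of_forall_lt (hM : ∀ i ∈ W, i < M) {T : Finset ℕ} (hT : T ⊆ W) :
    ∏ i ∈ T, outSum (arcWeight x y) (insert M W) i
      = ∑ Z ∈ T.powerset,
          (∏ i ∈ Z, x i * y i M) * ∏ i ∈ T \ Z, outSum (arcWeight x y) W i := by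
  have hMW : M ∉ W := fun h => (hM M h).false
  rw [prod_congr rfl fun i hi => outSum_insert_of_lt hMW (hM i (hT hi)), prod_add]

theorem mapSum_insert_of_forall_lt (hM : ∀ i ∈ W, i < M) {S : Finset ℕ} (hMS : M ∉ S) :
    mapSum (arcWeight x y) (insert M W) S = y M M * (xSum x W + x M) *
      ∑ Z ∈ (W \ S).powerset,
        (∏ i ∈ Z, x i * y i M) * mapSum (arcWeight x y) W (S ∪ Z) := by
  have hMW : M ∉ W := fun h => (hM M h).false
  have hmax : ∀ i ∈ insert M W, i ≤ M := by
    simpa using fun i hi => (hM i hi).le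
  rw [mapSum, insert_sdiff_of_notMem _ hMS, prod_insert fun h => hMW (mem_sdiff.1 h).1,
    outSum_of_forall_le hmax, prod_outSum_insert_of_forall_lt hM sdiff_subset, xSum,
    sum_insert hMW, add_comm (x M)]
  simp only [mapSum, xSum, sdiff_sdiff_left, sup_eq_union]

end ArcWeight

section ClosedForm

variable {R : Type*} [CommRing R] {x : ℕ → R} {y : ℕ → ℕ → R}

theorem tA_of_two_le_card {A : Finset ℕ} (hA : 2 ≤ A.card) :
    tA x y A = x (fmin A) * y (fmax A) (fmax A)
      * ∏ i ∈ A \ {fmin A, fmax A}, outSum (arcWeight x y) A i := by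
  rw [tA, if_pos hA]
  congr 1
  refine prod_congr ?_ fun i _ => (outSum_arcWeight A i).symm
  ext i
  simp

theorem tA_of_card_lt_two {A : Finset ℕ} (hA : A.card < 2) : tA x y A = 1 := by
  rw [tA, if_neg (by omega)]

theorem xSum_mul_tA {V : Finset ℕ} (hV : V.Nonempty) :
    xSum x V * tA x y V = x (fmin V) * mapSum (arcWeight x y) V {fmin V} := by
  rcases lt_or_ge V.card 2 with h | h
  · obtain ⟨a, rfl⟩ := card_eq_one.1 (le_antisymm (by omega) (card_pos.2 hV))
    simp [tA_of_card_lt_two h, xSum, mapSum, fmin_eq_of_forall_le (mem_singleton_self a)]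
  · have hM : fmax V ∈ V \ {fmin V} :=
      mem_sdiff.2 ⟨fmax_mem hV, by simpa using (fmin_lt_fmax h).ne'⟩
    have hrest : (V \ {fmin V}).erase (fmax V) = V \ {fmin V, fmax V} := by
      ext i; simp [and_comm, and_assoc]
    rw [mapSum, ← mul_prod_erase _ _ hM, outSum_of_forall_le fun _ => le_fmax, hrest,
      tA_of_two_le_card h]
    ring

theorem tA_insert_of_forall_lt (hW : W.Nonempty) (hM : ∀ i ∈ W, i < M) :
    tA x y (insert M W) = x (fmin W) * y M M * ∑ Z ∈ (W \ {fmin W}).powerset,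
      (∏ i ∈ Z, x i * y i M) * mapSum (arcWeight x y) W (insert (fmin W) Z) := by
  have hMW : M ∉ W := fun h => (hM M h).false
  have hcard : 2 ≤ (insert M W).card := by
    rw [card_insert_of_notMem hMW]; have := hW.card_pos; omega
  have hmin : fmin (insert M W) = fmin W := fmin_eq_of_forall_le (mem_insert_of_mem (fmin_mem hW))
    (by simpa using ⟨(hM _ (fmin_mem hW)).le, fun i => fmin_le⟩)
  have hmax : fmax (insert M W) = M := fmax_eq_of_forall_le (mem_insert_self M W)
    (by simpa using fun i hi => (hM i hi).le)
  have hinner : insert M W \ {fmin W, M} = W \ {fmin W} := by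
    ext i
    simp only [mem_sdiff, mem_insert, mem_singleton]
    constructor
    · rintro ⟨rfl | hi, h⟩ <;> tauto
    · rintro ⟨hi, h⟩; exact ⟨Or.inr hi, fun h' => h'.elim h fun hiM => hMW (hiM ▸ hi)⟩
  rw [tA_of_two_le_card hcard, hmin, hmax, hinner,
    prod_outSum_insert_of_forall_lt hM sdiff_subset]
  simp only [mapSum, sdiff_sdiff_left, sup_eq_union, ← insert_eq]

end ClosedForm

section TreeFormula

variable {R : Type*} [CommRing R] {x : ℕ → R} {y : ℕ → ℕ → R}

theorem mapSum_insert_min_eq_sum_of_treeSum {V Z : Finset ℕ} {m : ℕ} (hm : m ∈ V)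
    (hmin : ∀ i ∈ V, m ≤ i) (hZ : Z ⊆ V \ {m})
    (htree : ∀ D ⊆ V, D.Nonempty → treeSum (arcWeight x y) D (fmin D) = tA x y D) :
    mapSum (arcWeight x y) V (insert m Z) = ∑ B ∈ (V \ insert m Z).powerset,
      mapSum (arcWeight x y) (Z ∪ B) Z * tA x y (V \ (Z ∪ B)) := by
  have hmZ : m ∉ Z := fun h => by simpa using hZ h
  rw [mapSum_insert_eq_sum_mapSum_mul_treeSum _ hm hmZ (hZ.trans sdiff_subset)]
  refine sum_congr rfl fun B hB => ?_
  have hmB : m ∈ V \ (Z ∪ B) := by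
    have := @mem_powerset.1 hB m
    simp_all
  rw [← htree _ sdiff_subset ⟨_, hmB⟩,
    fmin_eq_of_forall_le hmB fun i hi => hmin i (mem_sdiff.1 hi).1]

theorem mapSum_min_eq_sum_of_treeSum {V : Finset ℕ} {m : ℕ} (hm : m ∈ V)
    (hmin : ∀ i ∈ V, m ≤ i)
    (htree : ∀ D ⊆ V, D.Nonempty → treeSum (arcWeight x y) D (fmin D) = tA x y D) :
    mapSum (arcWeight x y) V {m} = ∑ B ∈ (V \ {m}).powerset,
      mapSum (arcWeight x y) B ∅ * tA x y (V \ B) := by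
  simpa using mapSum_insert_min_eq_sum_of_treeSum hm hmin (empty_subset _) htree

theorem sum_mapSum_mul_mapSum_min_comm {W Z : Finset ℕ} {m : ℕ} (hm : m ∈ W)
    (hmin : ∀ i ∈ W, m ≤ i) (hZ : Z ⊆ W \ {m})
    (htree : ∀ D ⊆ W, D.Nonempty → treeSum (arcWeight x y) D (fmin D) = tA x y D) :
    ∑ C ∈ (W \ insert m Z).powerset,
        mapSum (arcWeight x y) (Z ∪ C) Z * mapSum (arcWeight x y) (W \ (Z ∪ C)) {m}
      = ∑ B ∈ (W \ insert m Z).powerset,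
        mapSum (arcWeight x y) B ∅ * mapSum (arcWeight x y) (W \ B) (insert m Z) := by
  have hsub : ∀ {B}, ∀ D ⊆ W \ B, D.Nonempty →
      treeSum (arcWeight x y) D (fmin D) = tA x y D := fun D hD => htree D (hD.trans sdiff_subset)
  have hmin' : ∀ {B}, ∀ i ∈ W \ B, m ≤ i := fun i hi => hmin i (mem_sdiff.1 hi).1
  calc _ = ∑ C ∈ (W \ insert m Z).powerset, ∑ B ∈ ((W \ insert m Z) \ C).powerset,
          mapSum (arcWeight x y) (Z ∪ C) Z *
            (mapSum (arcWeight x y) B ∅ * tA x y ((W \ (Z ∪ C)) \ B)) := by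
        refine sum_congr rfl fun C hC => ?_
        have hmC : m ∈ W \ (Z ∪ C) := by
          have := @mem_powerset.1 hC m
          have := @hZ m
          simp_all
        rw [mapSum_min_eq_sum_of_treeSum hmC hmin' hsub, mul_sum]
        congr 2
        ext i; simp only [mem_sdiff, mem_union, mem_insert, mem_singleton]; tauto
    _ = ∑ B ∈ (W \ insert m Z).powerset, ∑ C ∈ ((W \ insert m Z) \ B).powerset,
          mapSum (arcWeight x y) B ∅ *
            (mapSum (arcWeight x y) (Z ∪ C) Z * tA x y ((W \ B) \ (Z ∪ C))) := by
        rw [sum_powerset_sum_powerset_sdiff_comm]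
        refine sum_congr rfl fun B _ => sum_congr rfl fun C _ => ?_
        rw [sdiff_sdiff_comm]
        ring
    _ = _ := by
        refine sum_congr rfl fun B hB => ?_
        have hB := mem_powerset.1 hB
        have hmB : m ∈ W \ B := by
          have := @hB m
          simp_all
        have hZB : Z ⊆ (W \ B) \ {m} := by
          intro i hi
          have := @hB i
          have := hZ hi
          simp_all
        rw [mapSum_insert_min_eq_sum_of_treeSum hmB hmin' hZB hsub, sdiff_sdiff_comm, mul_sum]

theorem xSum_mul_mapSum_insert_min {W Z : Finset ℕ} {m : ℕ} (hm : m ∈ W)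
    (hmin : ∀ i ∈ W, m ≤ i) (hZ : Z ⊆ W \ {m})
    (htree : ∀ D ⊆ W, D.Nonempty → treeSum (arcWeight x y) D (fmin D) = tA x y D) :
    xSum x W * mapSum (arcWeight x y) W (insert m Z)
      = x m * ∑ B ∈ (W \ insert m Z).powerset,
          mapSum (arcWeight x y) B ∅ * mapSum (arcWeight x y) (W \ B) (insert m Z)
        + ∑ C ∈ (W \ insert m Z).powerset,
          xSum x (Z ∪ C) * (mapSum (arcWeight x y) (Z ∪ C) Z * tA x y (W \ (Z ∪ C))) := by
  rw [← sum_mapSum_mul_mapSum_min_comm hm hmin hZ htree,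
    mapSum_insert_min_eq_sum_of_treeSum hm hmin hZ htree, mul_sum, mul_sum, ← sum_add_distrib]
  refine sum_congr rfl fun C hC => ?_
  have hCW : Z ∪ C ⊆ W :=
    union_subset (hZ.trans sdiff_subset) ((mem_powerset.1 hC).trans sdiff_subset)
  have hmC : m ∈ W \ (Z ∪ C) := by
    have := @mem_powerset.1 hC m
    have := @hZ m
    simp_all
  have hsplit : xSum x W = xSum x (W \ (Z ∪ C)) + xSum x (Z ∪ C) := (sum_sdiff hCW).symm
  have hrest := xSum_mul_tA (x := x) (y := y) ⟨_, hmC⟩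
  rw [fmin_eq_of_forall_le hmC fun i hi => hmin i (mem_sdiff.1 hi).1] at hrest
  rw [hsplit]
  linear_combination mapSum (arcWeight x y) (Z ∪ C) Z * hrest

theorem sum_mapSum_mul_tA_insert_max {W : Finset ℕ} {m M : ℕ} (hm : m ∈ W)
    (hmin : ∀ i ∈ W, m ≤ i) (hM : ∀ i ∈ W, i < M) :
    ∑ B ∈ (W \ {m}).powerset, mapSum (arcWeight x y) B ∅ * tA x y (insert M W \ B)
      = y M M * ∑ Z ∈ (W \ {m}).powerset, (∏ i ∈ Z, x i * y i M) *
          (x m * ∑ B ∈ ((W \ {m}) \ Z).powerset,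
            mapSum (arcWeight x y) B ∅ * mapSum (arcWeight x y) (W \ B) (insert m Z)) := by
  calc _ = ∑ B ∈ (W \ {m}).powerset, ∑ Z ∈ ((W \ {m}) \ B).powerset,
        y M M * ((∏ i ∈ Z, x i * y i M) * (x m *
          (mapSum (arcWeight x y) B ∅ * mapSum (arcWeight x y) (W \ B) (insert m Z)))) := by
        refine sum_congr rfl fun B hB => ?_
        have hmB : m ∈ W \ B := by
          have := @mem_powerset.1 hB m
          simp_all
        rw [insert_sdiff_of_notMem _ fun h => (hM M (mem_sdiff.1 (mem_powerset.1 hB h)).1).false,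
          tA_insert_of_forall_lt ⟨m, hmB⟩ fun i hi => hM i (mem_sdiff.1 hi).1,
          fmin_eq_of_forall_le hmB fun i hi => hmin i (mem_sdiff.1 hi).1, sdiff_sdiff_comm,
          mul_sum, mul_sum]
        exact sum_congr rfl fun Z _ => by ring
    _ = _ := by
        rw [sum_powerset_sum_powerset_sdiff_comm, mul_sum]
        exact sum_congr rfl fun Z _ => by rw [mul_sum, mul_sum, mul_sum]

theorem sum_mapSum_insert_max_mul_tA {W : Finset ℕ} {m M : ℕ} (hM : ∀ i ∈ W, i < M) :
    ∑ B ∈ (W \ {m}).powerset,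
        mapSum (arcWeight x y) (insert M B) ∅ * tA x y (insert M W \ insert M B)
      = y M M * ∑ Z ∈ (W \ {m}).powerset, (∏ i ∈ Z, x i * y i M) *
          ∑ C ∈ ((W \ {m}) \ Z).powerset, (xSum x (Z ∪ C) + x M) *
            (mapSum (arcWeight x y) (Z ∪ C) Z * tA x y (W \ (Z ∪ C))) := by
  calc _ = ∑ B ∈ (W \ {m}).powerset, ∑ Z ∈ B.powerset,
        y M M * ((∏ i ∈ Z, x i * y i M) * ((xSum x B + x M) *
          (mapSum (arcWeight x y) B Z * tA x y (W \ B)))) := by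
        refine sum_congr rfl fun B hB => ?_
        have hBW : B ⊆ W := (mem_powerset.1 hB).trans sdiff_subset
        rw [mapSum_insert_of_forall_lt (fun i hi => hM i (hBW hi)) (notMem_empty M),
          insert_sdiff_insert, sdiff_insert_of_notMem fun h => (hM M h).false, sdiff_empty,
          mul_sum, sum_mul]
        exact sum_congr rfl fun Z _ => by rw [empty_union]; ring
    _ = _ := by
        rw [sum_powerset_sum_powerset_eq_sum_sdiff, mul_sum]
        exact sum_congr rfl fun Z _ => by rw [mul_sum, mul_sum]

theorem mapSum_insert_max_min_eq_sum {W : Finset ℕ} {m M : ℕ} (hm : m ∈ W)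
    (hmin : ∀ i ∈ W, m ≤ i) (hM : ∀ i ∈ W, i < M)
    (htree : ∀ D ⊆ W, D.Nonempty → treeSum (arcWeight x y) D (fmin D) = tA x y D) :
    mapSum (arcWeight x y) (insert M W) {m} = ∑ B ∈ (insert M W \ {m}).powerset,
      mapSum (arcWeight x y) B ∅ * tA x y (insert M W \ B) := by
  have hMm : M ∉ ({m} : Finset ℕ) := by simpa using (hM m hm).ne'
  rw [insert_sdiff_of_notMem _ hMm, sum_powerset_insert fun h => (hM M (mem_sdiff.1 h).1).false,
    sum_mapSum_mul_tA_insert_max hm hmin hM, sum_mapSum_insert_max_mul_tA hM,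
    mapSum_insert_of_forall_lt hM hMm, ← mul_add, ← sum_add_distrib, mul_assoc, mul_sum]
  refine congrArg (y M M * ·) (sum_congr rfl fun Z hZ => ?_)
  have hZ := mem_powerset.1 hZ
  rw [← insert_eq, sdiff_sdiff_left, sup_eq_union, ← insert_eq]
  have key := xSum_mul_mapSum_insert_min hm hmin hZ htree
  have expand := mapSum_insert_min_eq_sum_of_treeSum hm hmin hZ htree
  simp only [add_mul, sum_add_distrib, ← mul_sum]
  linear_combination (∏ i ∈ Z, x i * y i M) * (key + x M * expand)

theorem mapSum_min_eq_sum_of_treeSum_ssubset {V : Finset ℕ} {m : ℕ} (hm : m ∈ V)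
    (hmin : ∀ i ∈ V, m ≤ i)
    (htree : ∀ D ⊂ V, D.Nonempty → treeSum (arcWeight x y) D (fmin D) = tA x y D) :
    mapSum (arcWeight x y) V {m} = ∑ B ∈ (V \ {m}).powerset,
      mapSum (arcWeight x y) B ∅ * tA x y (V \ B) := by
  by_cases hVm : V = {m}
  · subst hVm
    simp [mapSum, tA_of_card_lt_two]
  have hMV := fmax_mem ⟨m, hm⟩
  have hmM : m ≠ fmax V := fun h => hVm <| eq_singleton_iff_unique_mem.2
    ⟨hm, fun i hi => le_antisymm (h ▸ le_fmax hi) (hmin i hi)⟩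
  rw [← insert_erase hMV]
  refine mapSum_insert_max_min_eq_sum (mem_erase.2 ⟨hmM, hm⟩)
    (fun i hi => hmin i (mem_of_mem_erase hi))
    (fun i hi => (le_fmax (mem_of_mem_erase hi)).lt_of_ne (ne_of_mem_erase hi))
    fun D hD => htree D (hD.trans_ssubset (erase_ssubset hMV))

theorem treeSum_min_eq_tA_of_mapSum_eq {V : Finset ℕ} {m : ℕ} (hm : m ∈ V)
    (hmin : ∀ i ∈ V, m ≤ i)
    (htree : ∀ D ⊂ V, D.Nonempty → treeSum (arcWeight x y) D (fmin D) = tA x y D)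
    (hV : mapSum (arcWeight x y) V {m} = ∑ B ∈ (V \ {m}).powerset,
      mapSum (arcWeight x y) B ∅ * tA x y (V \ B)) :
    treeSum (arcWeight x y) V m = tA x y V := by
  have hsplit := mapSum_insert_eq_sum_mapSum_mul_treeSum (arcWeight x y) hm (notMem_empty m)
    (empty_subset V)
  simp only [insert_empty, empty_union] at hsplit
  rw [hV, ← sub_eq_zero, ← sum_sub_distrib] at hsplit
  rw [sum_eq_single_of_mem ∅ (empty_mem_powerset _)] at hsplit
  · simp only [mapSum, Finset.sdiff_self, sdiff_empty, prod_empty, one_mul] at hsplit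
    linear_combination -hsplit
  intro B hB hB0
  have hmB : m ∈ V \ B := by
    have := @mem_powerset.1 hB m
    simp_all
  have hBV : V \ B ⊂ V := sdiff_ssubset ((mem_powerset.1 hB).trans sdiff_subset)
    (nonempty_iff_ne_empty.2 hB0)
  rw [← fmin_eq_of_forall_le hmB fun i hi => hmin i (mem_sdiff.1 hi).1, htree _ hBV ⟨m, hmB⟩,
    sub_self]

theorem treeSum_fmin_eq_tA {V : Finset ℕ} (hV : V.Nonempty) :
    treeSum (arcWeight x y) V (fmin V) = tA x y V := by
  induction V using strongInduction with
  | H V ih =>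
    have hmin : ∀ i ∈ V, fmin V ≤ i := fun _ => fmin_le
    exact treeSum_min_eq_tA_of_mapSum_eq (fmin_mem hV) hmin ih
      (mapSum_min_eq_sum_of_treeSum_ssubset (fmin_mem hV) hmin ih)

end TreeFormula

section Recursion

variable {R : Type*} [CommRing R] (x : ℕ → R) (y : ℕ → ℕ → R)

def blockWeight (m : ℕ) (B : Finset ℕ) : R := x m * (∑ j ∈ B, y (fmin B) j) * tA x y B

/-- The right-hand side of the recursion, with the blocks `B ∋ a` indexed by `B ∖ {a}`. -/
def recSum (A : Finset ℕ) (a : ℕ) : R :=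
  ∑ B ∈ (A \ {fmin A, a}).powerset,
    blockWeight x y (fmin A) (insert a B) * tA x y (A \ insert a B)

variable {x y}

theorem xSum_mul_blockWeight {B : Finset ℕ} (hB : B.Nonempty) (m : ℕ) :
    xSum x B * blockWeight x y m B = x m * mapSum (arcWeight x y) B ∅ := by
  have hxt := xSum_mul_tA (x := x) (y := y) hB
  rw [mapSum, sdiff_empty, ← mul_prod_erase _ _ (fmin_mem hB), outSum_fmin,
    ← sdiff_singleton_eq_erase, ← mapSum, blockWeight]
  linear_combination x m * (∑ j ∈ B, y (fmin B) j) * hxt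

theorem mapSum_min_eq_sum {V : Finset ℕ} {m : ℕ} (hm : m ∈ V) (hmin : ∀ i ∈ V, m ≤ i) :
    mapSum (arcWeight x y) V {m} = ∑ B ∈ (V \ {m}).powerset,
      mapSum (arcWeight x y) B ∅ * tA x y (V \ B) :=
  mapSum_min_eq_sum_of_treeSum hm hmin fun _ _ => treeSum_fmin_eq_tA

section Decomposition

variable {A : Finset ℕ} {a : ℕ}

theorem xSum_mul_tA_eq_sum (ha : a ∈ A) (ham : a ≠ fmin A) :
    xSum x A * tA x y A = x (fmin A) *
      (∑ B ∈ (A \ {fmin A, a}).powerset,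
          mapSum (arcWeight x y) (insert a B) ∅ * tA x y (A \ insert a B)
        + ∑ E ∈ (A \ {fmin A, a}).powerset, mapSum (arcWeight x y) E ∅ * tA x y (A \ E)) := by
  have hsplit : A \ {fmin A} = insert a (A \ {fmin A, a}) := by
    ext i
    by_cases hia : i = a
    · subst hia; simp [ha, ham]
    · simp [hia]
  rw [xSum_mul_tA ⟨a, ha⟩, mapSum_min_eq_sum (fmin_mem ⟨a, ha⟩) fun _ => fmin_le, hsplit,
    sum_powerset_insert (by simp), add_comm]

theorem xSum_mul_recSum (ha : a ∈ A) (ham : a ≠ fmin A) :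
    xSum x A * recSum x y A a = x (fmin A) *
      (∑ B ∈ (A \ {fmin A, a}).powerset,
          mapSum (arcWeight x y) (insert a B) ∅ * tA x y (A \ insert a B)
        + ∑ E ∈ (A \ {fmin A, a}).powerset,
            mapSum (arcWeight x y) E ∅ * recSum x y (A \ E) a) := by
  calc _ = ∑ B ∈ (A \ {fmin A, a}).powerset,
        (x (fmin A) * (mapSum (arcWeight x y) (insert a B) ∅ * tA x y (A \ insert a B))
          + x (fmin A) * ∑ E ∈ ((A \ {fmin A, a}) \ B).powerset,
              blockWeight x y (fmin A) (insert a B) *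
                (mapSum (arcWeight x y) E ∅ * tA x y ((A \ insert a B) \ E))) := by
        rw [recSum, mul_sum]
        refine sum_congr rfl fun B hB => ?_
        have hB := mem_powerset.1 hB
        have hBA : insert a B ⊆ A := insert_subset ha (hB.trans sdiff_subset)
        have hmC : fmin A ∈ A \ insert a B := by
          refine mem_sdiff.2 ⟨fmin_mem ⟨a, ha⟩, fun h => ?_⟩
          rcases mem_insert.1 h with h | h
          · exact ham h.symm
          · simpa using hB h
        have hC := fmin_eq_of_forall_le hmC fun i hi => fmin_le (mem_sdiff.1 hi).1
        have hxt := xSum_mul_tA (x := x) (y := y) ⟨_, hmC⟩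
        rw [hC, mapSum_min_eq_sum hmC fun i hi => fmin_le (mem_sdiff.1 hi).1] at hxt
        have hCm : (A \ insert a B) \ {fmin A} = (A \ {fmin A, a}) \ B := by
          ext i; simp only [mem_sdiff, mem_insert, mem_singleton]; tauto
        rw [hCm] at hxt
        have hX : xSum x A = xSum x (A \ insert a B) + xSum x (insert a B) := (sum_sdiff hBA).symm
        rw [hX, ← mul_sum]
        linear_combination (tA x y (A \ insert a B)) *
            xSum_mul_blockWeight (y := y) (insert_nonempty a B) (fmin A)
          + blockWeight x y (fmin A) (insert a B) * hxt
    _ = _ := by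
        rw [sum_add_distrib, ← mul_sum, ← mul_sum, sum_powerset_sum_powerset_sdiff_comm,
          mul_add]
        congr 2
        refine sum_congr rfl fun E hE => ?_
        have hE := mem_powerset.1 hE
        have hmE : fmin A ∈ A \ E := mem_sdiff.2 ⟨fmin_mem ⟨a, ha⟩, fun h => by simpa using hE h⟩
        rw [recSum, fmin_eq_of_forall_le hmE fun i hi => fmin_le (mem_sdiff.1 hi).1,
          sdiff_sdiff_comm, mul_sum]
        refine sum_congr rfl fun B _ => ?_
        rw [show (A \ insert a B) \ E = (A \ E) \ insert a B from sdiff_sdiff_comm ..]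
        ring

end Decomposition

theorem tA_eq_recSum_of_xSum_ne_zero [IsDomain R]
    (hx : ∀ S : Finset ℕ, S.Nonempty → xSum x S ≠ 0) {A : Finset ℕ} (hA : 2 ≤ A.card)
    {a : ℕ} (ha : a ∈ A) (ham : a ≠ fmin A) : tA x y A = recSum x y A a := by
  induction A using strongInduction with
  | H A ih =>
    have hmA := fmin_mem ⟨a, ha⟩
    have hinner :
        ∑ E ∈ (A \ {fmin A, a}).powerset, mapSum (arcWeight x y) E ∅ * tA x y (A \ E)
        - ∑ E ∈ (A \ {fmin A, a}).powerset, mapSum (arcWeight x y) E ∅ * recSum x y (A \ E) a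
          = tA x y A - recSum x y A a := by
      rw [← sum_sub_distrib, ← sum_congr rfl fun E _ => mul_sub _ _ _,
        sum_eq_single_of_mem ∅ (empty_mem_powerset _)]
      · simp [mapSum]
      intro E hE hE0
      have hE := mem_powerset.1 hE
      have hmE : fmin A ∈ A \ E := by
        have := @hE (fmin A); simp_all
      have haE : a ∈ A \ E := by
        have := @hE a; simp_all
      have hfmin := fmin_eq_of_forall_le hmE fun i hi => fmin_le (mem_sdiff.1 hi).1
      have hcard : 2 ≤ (A \ E).card := one_lt_card.2 ⟨_, hmE, _, haE, Ne.symm ham⟩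
      rw [ih _ (sdiff_ssubset (hE.trans sdiff_subset) (nonempty_iff_ne_empty.2 hE0)) hcard haE
        (hfmin ▸ ham), sub_self, mul_zero]
    have hxA : xSum x A = xSum x (A \ {fmin A}) + x (fmin A) := by
      rw [xSum, xSum, ← sum_sdiff (singleton_subset_iff.2 hmA), sum_singleton]
    have key : xSum x (A \ {fmin A}) * (tA x y A - recSum x y A a) = 0 := by
      linear_combination xSum_mul_tA_eq_sum (x := x) (y := y) ha ham
        - xSum_mul_recSum (x := x) (y := y) ha ham + x (fmin A) * hinner
        - (tA x y A - recSum x y A a) * hxA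
    exact sub_eq_zero.1 ((mul_eq_zero.1 key).resolve_left
      (hx _ ⟨a, mem_sdiff.2 ⟨ha, by simpa using ham⟩⟩))

theorem tA_recursion_of_xSum_ne_zero [IsDomain R]
    (hx : ∀ S : Finset ℕ, S.Nonempty → xSum x S ≠ 0) {A : Finset ℕ} (hA : 2 ≤ A.card)
    {a : ℕ} (ha : a ∈ A) (ham : a ≠ fmin A) :
    tA x y A = ∑ B ∈ A.powerset.filter (fun B => a ∈ B ∧ fmin A ∉ B),
      x (fmin A) * (∑ j ∈ B, y (fmin B) j) * tA x y B * tA x y (A \ B) := by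
  rw [sum_filter_mem_notMem_eq_sum_insert ha ham, tA_eq_recSum_of_xSum_ne_zero hx hA ha ham]
  rfl

theorem map_tA {S : Type*} [CommRing S] (f : R →+* S) (A : Finset ℕ) :
    f (tA x y A) = tA (fun i => f (x i)) (fun i j => f (y i j)) A := by
  unfold tA
  split_ifs
  · simp only [map_mul, map_prod, map_sum, map_add]
  · exact map_one f

end Recursion

end

end TARecursion

open scoped Classical in
theorem tA_recursion_general {R : Type*} [CommRing R] (x : ℕ → R) (y : ℕ → ℕ → R)
    (A : Finset ℕ) (hA : 2 ≤ A.card)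
    (a : ℕ) (ha : a ∈ A) (ha' : a ≠ fmin A) :
    tA x y A = ∑ B ∈ A.powerset.filter (fun B => a ∈ B ∧ fmin A ∉ B),
      x (fmin A) * (∑ j ∈ B, y (fmin B) j) * tA x y B * tA x y (A \ B) := by
  let X : ℕ → MvPolynomial (ℕ ⊕ ℕ × ℕ) ℤ := fun i => .X (.inl i)
  let Y : ℕ → ℕ → MvPolynomial (ℕ ⊕ ℕ × ℕ) ℤ := fun i j => .X (.inr (i, j))
  have hX : ∀ S : Finset ℕ, S.Nonempty → TARecursion.xSum X S ≠ 0 := fun S hS h => by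
    have := congrArg (MvPolynomial.eval fun _ => (1 : ℤ)) h
    simp [TARecursion.xSum, X] at this
    exact hS.ne_empty this
  have hgen := congrArg
    (MvPolynomial.eval₂Hom (Int.castRingHom R) (Sum.elim x fun p => y p.1 p.2))
    (TARecursion.tA_recursion_of_xSum_ne_zero (y := Y) hX hA ha ha')
  simp only [TARecursion.map_tA, map_sum, map_mul] at hgen
  simpa [X, Y] using hgen

open scoped Classical in
/-- Recursion for the closed-form polynomials `t_A` (Proposition 3.2):
for `|A| ≥ 2` and a fixed `a ∈ A ∖ {min A}`,
`t_A = ∑_{B ⊔ C = A, min A ∈ C, a ∈ B} x_{min A} (∑_{j∈B} y_{min B, j}) t_B t_C`. -/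
theorem tA_recursion {R : Type*} [CommRing R] (x : ℕ → R) (y : ℕ → ℕ → R)
    (A : Finset ℕ) (hA : 2 ≤ A.card) (hpos : ∀ i ∈ A, 0 < i)
    (a : ℕ) (ha : a ∈ A) (ha' : a ≠ fmin A) :
    tA x y A = ∑ B ∈ A.powerset.filter (fun B => a ∈ B ∧ fmin A ∉ B),
      x (fmin A) * (∑ j ∈ B, y (fmin B) j) * tA x y B * tA x y (A \ B) :=
  tA_recursion_general x y A hA a ha ha'
end

section
/- Recursion for the hook-sum generating function Θ_A (Proposition 3.3): for a finite set A of positive integers with |A| ≥ 2, let Θ_A = ∑ over unordered increasing trees T on A (rooted at min(A)) of ∏_{i ∈ A∖{min(A)}} x_{f_T(i)}·(∑_{j ∈ h_T(i)} y_{i,j}), and Θ_A = 1 if |A| = 1. Then for any fixed a ∈ A∖{min(A)}: Θ_A = ∑ over pairs (B,C) with B ⊔ C = A, min(A) ∈ C, a ∈ B, of x_{min(A)}·(∑_{j∈B} y_{min(B),j})·Θ_B·Θ_C. -/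
open scoped Classical in
/-- The hook-sum generating function `Θ_A`: the sum over unordered increasing trees on `A`
(encoded by their parent functions `p : A → A`, fixing the root `min A` and with `p v < v`
for every non-root vertex `v`) of `∏_{i ∈ A ∖ {min A}} x_{f_T(i)} (∑_{j ∈ h_T(i)} y_{i,j})`,
where the hook `h_T(i)` consists of the vertices `j` with `p^[k] j = i` for some `k`.
For `|A| = 1` there is a unique (trivial) tree and `Θ_A = 1`. -/
noncomputable def ThetaA {R : Type*} [CommRing R] (x : ℕ → R) (y : ℕ → ℕ → R)
    (A : Finset ℕ) : R :=
  ∑ p ∈ (Finset.univ : Finset (↥A → ↥A)).filter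
      (fun p => ∀ v : ↥A, ((v : ℕ) = fmin A → p v = v) ∧ ((v : ℕ) ≠ fmin A → (p v : ℕ) < (v : ℕ))),
    ∏ v ∈ Finset.univ.filter (fun v : ↥A => (v : ℕ) ≠ fmin A),
      x (p v) * ∑ u ∈ Finset.univ.filter (fun u : ↥A => ∃ k : ℕ, p^[k] u = v), y (v : ℕ) (u : ℕ)


/-!
Encode an increasing tree on `A` by its parent map on `ℕ`, extended by the identity off `A`.
Let `b` be the child of the root whose subtree contains `a`, and `B` the hook of `b`. Cutting the
edge `b → min A` (i.e. replacing `p` by `update p b b`) leaves an increasing tree on `B`, rooted at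
`b = min B`, and one on `A \ B`, still rooted at `min A`; grafting the root of a tree on `B` below
`min A` in a tree on `A \ B` is the inverse operation. The cut changes neither parents nor hooks
of the other vertices, so the weight factors into the weights of the two pieces times the factor
`x_{min A} ∑_{j ∈ B} y_{min B, j}` of the edge `b → min A`.
-/

open Function Finset
open scoped Classical

lemma fmin_mem {A : Finset ℕ} (h : A.Nonempty) : fmin A ∈ A := by
  obtain ⟨m, hm⟩ := A.min_of_nonempty h
  rw [fmin, hm]
  exact mem_of_min hm

lemma fmin_le {A : Finset ℕ} {n : ℕ} (h : n ∈ A) : fmin A ≤ n := by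
  obtain ⟨m, hm⟩ := A.min_of_nonempty ⟨n, h⟩
  rw [fmin, hm]
  exact WithTop.coe_le_coe.1 (hm ▸ min_le h)

lemma fmin_eq_of_forall_le {A : Finset ℕ} {m : ℕ} (hm : m ∈ A) (h : ∀ n ∈ A, m ≤ n) :
    fmin A = m :=
  le_antisymm (fmin_le hm) (h _ (fmin_mem ⟨m, hm⟩))

lemma fmin_sdiff {A B : Finset ℕ} (hA : A.Nonempty) (hB : fmin A ∉ B) : fmin (A \ B) = fmin A :=
  fmin_eq_of_forall_le (mem_sdiff.2 ⟨fmin_mem hA, hB⟩) fun _ hn => fmin_le (mem_sdiff.1 hn).1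

section Iterate

variable {α : Type*} {f g : α → α}

lemma iterate_eq_iterate_of_forall_lt {x : α} {k : ℕ}
    (h : ∀ j < k, f (f^[j] x) = g (f^[j] x)) : f^[k] x = g^[k] x := by
  induction k with
  | zero => rfl
  | succ k ih =>
    rw [iterate_succ_apply', iterate_succ_apply', ← ih fun j hj => h j (by omega),
      h k k.lt_succ_self]

lemma iterate_apply_eq_or_eq {c r : α} (hc : f c = r) (hr : f r = r) (n : ℕ) :
    f^[n] c = c ∨ f^[n] c = r := by
  cases n with
  | zero => exact Or.inl rfl
  | succ n => exact Or.inr (by rw [iterate_succ_apply, hc, iterate_fixed hr])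

lemma exists_iterate_update_self_iff [DecidableEq α] {c v x : α} (hv : ∀ n, f^[n] c ≠ v) :
    (∃ k, (update f c c)^[k] x = v) ↔ ∃ k, f^[k] x = v := by
  constructor
  · rintro ⟨k, hk⟩
    refine ⟨k, (iterate_eq_iterate_of_forall_lt fun j hj => ?_).symm.trans hk⟩
    refine update_of_ne (fun hc => hv 0 ?_) _ _
    rw [iterate_zero_apply, ← hk, show k = (k - j) + j by omega, iterate_add_apply, hc,
      iterate_fixed (update_self c c f)]
  · rintro ⟨k, hk⟩
    refine ⟨k, (iterate_eq_iterate_of_forall_lt fun j hj => ?_).symm.trans hk⟩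
    refine (update_of_ne (fun hc => hv (k - j) ?_) _ _).symm
    rw [← hk, ← hc, ← iterate_add_apply, Nat.sub_add_cancel hj.le]

lemma exists_iterate_eq_of_forall_lt {S : Set ℕ} {h : ℕ → ℕ} {c : ℕ}
    (hS : ∀ n ∈ S, n ≠ c → h n ∈ S ∧ h n < n) {n : ℕ} (hn : n ∈ S) : ∃ k, h^[k] n = c := by
  induction n using Nat.strong_induction_on with
  | _ n ih =>
    by_cases hnc : n = c
    · exact ⟨0, hnc⟩
    · obtain ⟨k, hk⟩ := ih _ (hS n hn hnc).2 (hS n hn hnc).1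
      exact ⟨k + 1, hk⟩

end Iterate

/-- An increasing tree on `A`, encoded by its parent map extended by the identity off `A`. -/
structure IsParentMap (A : Finset ℕ) (p : ℕ → ℕ) : Prop where
  apply_of_notMem : ∀ n ∉ A, p n = n
  mapsTo : ∀ n ∈ A, p n ∈ A
  apply_fmin : p (fmin A) = fmin A
  apply_lt : ∀ n ∈ A, n ≠ fmin A → p n < n

noncomputable def hook (A : Finset ℕ) (p : ℕ → ℕ) (v : ℕ) : Finset ℕ :=
  A.filter fun u => ∃ k, p^[k] u = v

lemma mem_hook {A : Finset ℕ} {p : ℕ → ℕ} {u v : ℕ} :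
    u ∈ hook A p v ↔ u ∈ A ∧ ∃ k, p^[k] u = v :=
  mem_filter

lemma hook_subset (A : Finset ℕ) (p : ℕ → ℕ) (v : ℕ) : hook A p v ⊆ A :=
  filter_subset _ _

lemma self_mem_hook {A : Finset ℕ} (p : ℕ → ℕ) {v : ℕ} (hv : v ∈ A) : v ∈ hook A p v :=
  mem_hook.2 ⟨hv, 0, rfl⟩

noncomputable def hookFactor {R : Type*} [CommRing R] (x : ℕ → R) (y : ℕ → ℕ → R)
    (A : Finset ℕ) (p : ℕ → ℕ) (v : ℕ) : R :=
  x (p v) * ∑ u ∈ hook A p v, y v u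

noncomputable def weight {R : Type*} [CommRing R] (x : ℕ → R) (y : ℕ → ℕ → R) (A : Finset ℕ)
    (p : ℕ → ℕ) : R :=
  ∏ v ∈ A \ {fmin A}, hookFactor x y A p v

def extendParent (A : Finset ℕ) (p : A → A) : ℕ → ℕ :=
  fun n => if h : n ∈ A then p ⟨n, h⟩ else n

noncomputable def trees (A : Finset ℕ) : Finset (ℕ → ℕ) :=
  (univ.filter fun p : A → A =>
    ∀ v : A, ((v : ℕ) = fmin A → p v = v) ∧ ((v : ℕ) ≠ fmin A → (p v : ℕ) < v)).image
    (extendParent A)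

lemma extendParent_apply {A : Finset ℕ} (p : A → A) (v : A) : extendParent A p v = p v := by
  simp [extendParent]

lemma extendParent_injective (A : Finset ℕ) : Injective (extendParent A) := fun p q h =>
  funext fun v => Subtype.ext <| by simpa only [extendParent_apply] using congrFun h v

lemma iterate_extendParent {A : Finset ℕ} (p : A → A) (k : ℕ) (v : A) :
    (extendParent A p)^[k] v = (p^[k] v : ℕ) := by
  induction k generalizing v with
  | zero => rfl
  | succ k ih => rw [iterate_succ_apply, iterate_succ_apply, extendParent_apply, ih]

lemma mem_trees {A : Finset ℕ} {p : ℕ → ℕ} : p ∈ trees A ↔ IsParentMap A p := by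
  constructor
  · simp only [trees, mem_image, mem_filter, mem_univ, true_and]
    rintro ⟨p, hp, rfl⟩
    refine ⟨fun n hn => by simp [extendParent, hn], fun n hn => by simp [extendParent, hn],
      ?_, fun n hn hne => by simpa [extendParent, hn] using (hp ⟨n, hn⟩).2 hne⟩
    by_cases h : fmin A ∈ A
    · simp [extendParent, h, (hp ⟨_, h⟩).1 rfl]
    · simp [extendParent, h]
  · intro hp
    simp only [trees, mem_image, mem_filter, mem_univ, true_and]
    refine ⟨fun v => ⟨p v, hp.mapsTo v v.2⟩, fun v => ⟨fun h => Subtype.ext ?_,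
      hp.apply_lt v v.2⟩, funext fun n => ?_⟩
    · simp [h, hp.apply_fmin]
    · by_cases hn : n ∈ A
      · simp [extendParent, hn]
      · simp [extendParent, hn, hp.apply_of_notMem n hn]

lemma weight_extendParent {R : Type*} [CommRing R] (x : ℕ → R) (y : ℕ → ℕ → R)
    {A : Finset ℕ} (p : A → A) :
    weight x y A (extendParent A p) = ∏ v ∈ univ.filter (fun v : A => (v : ℕ) ≠ fmin A),
      x (p v) * ∑ u ∈ univ.filter (fun u : A => ∃ k, p^[k] u = v), y v u := by
  have hverts : A \ {fmin A} = (univ.filter fun v : A => (v : ℕ) ≠ fmin A).map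
      (Embedding.subtype _) := by
    ext n
    simp only [mem_sdiff, mem_singleton, mem_map, mem_filter, mem_univ, true_and,
      Embedding.subtype_apply]
    exact ⟨fun h => ⟨⟨n, h.1⟩, h.2, rfl⟩, by rintro ⟨v, hv, rfl⟩; exact ⟨v.2, hv⟩⟩
  have hhook (v : A) : hook A (extendParent A p) v =
      (univ.filter fun u : A => ∃ k, p^[k] u = v).map (Embedding.subtype _) := by
    ext n
    simp only [mem_hook, mem_filter, mem_map, mem_univ, true_and, Embedding.subtype_apply]
    constructor
    · rintro ⟨hn, k, hk⟩
      exact ⟨⟨n, hn⟩, ⟨k, Subtype.ext (by rw [← iterate_extendParent, hk])⟩, rfl⟩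
    · rintro ⟨u, ⟨k, hk⟩, rfl⟩
      exact ⟨u.2, k, by rw [iterate_extendParent, hk]⟩
  rw [weight, hverts, prod_map]
  refine prod_congr rfl fun v _ => ?_
  rw [Embedding.subtype_apply, hookFactor, extendParent_apply, hhook, sum_map]
  rfl

lemma ThetaA_eq_sum_weight {R : Type*} [CommRing R] (x : ℕ → R) (y : ℕ → ℕ → R)
    (A : Finset ℕ) : ThetaA x y A = ∑ p ∈ trees A, weight x y A p := by
  rw [trees, sum_image fun p _ q _ h => extendParent_injective A h, ThetaA]
  simp only [weight_extendParent]

lemma hook_eq_hook_piecewise {A X : Finset ℕ} {f : ℕ → ℕ} (hXA : X ⊆ A)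
    (hX : Set.MapsTo f X X) (hAX : Set.MapsTo f ↑(A \ X) ↑(A \ X)) {v : ℕ} (hv : v ∈ X) :
    hook A f v = hook X (X.piecewise f id) v := by
  have hiter {u : ℕ} (hu : u ∈ X) (k : ℕ) : (X.piecewise f id)^[k] u = f^[k] u :=
    (iterate_eq_iterate_of_forall_lt fun j _ =>
      (piecewise_eq_of_mem _ _ _ (hX.iterate j hu)).symm).symm
  ext u
  simp only [mem_hook]
  constructor
  · rintro ⟨hu, k, hk⟩
    have huX : u ∈ X := by
      by_contra huX
      exact (mem_sdiff.1 (hAX.iterate k (mem_sdiff.2 ⟨hu, huX⟩))).2 (hk ▸ hv)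
    exact ⟨huX, k, (hiter huX k).trans hk⟩
  · rintro ⟨hu, k, hk⟩
    exact ⟨hXA hu, k, (hiter hu k).symm.trans hk⟩

namespace IsParentMap

variable {A : Finset ℕ} {p : ℕ → ℕ}

lemma apply_le (hp : IsParentMap A p) {n : ℕ} (hn : n ∈ A) : p n ≤ n := by
  by_cases h : n = fmin A
  · rw [h, hp.apply_fmin]
  · exact (hp.apply_lt n hn h).le

lemma iterate_le (hp : IsParentMap A p) {n : ℕ} (hn : n ∈ A) (k : ℕ) : p^[k] n ≤ n := by
  induction k with
  | zero => rfl
  | succ k ih =>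
    rw [iterate_succ_apply']
    exact (hp.apply_le (Set.MapsTo.iterate hp.mapsTo k hn)).trans ih

lemma mem_of_apply_eq_fmin (hp : IsParentMap A p) {b : ℕ} (hb : p b = fmin A)
    (hbr : b ≠ fmin A) : b ∈ A := by
  by_contra h
  exact hbr (hp.apply_of_notMem b h ▸ hb)

lemma piecewise {X : Finset ℕ} {f : ℕ → ℕ} (hX : Set.MapsTo f X X)
    (hfmin : f (fmin X) = fmin X) (hlt : ∀ n ∈ X, n ≠ fmin X → f n < n) :
    IsParentMap X (X.piecewise f id) where
  apply_of_notMem n hn := piecewise_eq_of_notMem _ _ _ hn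
  mapsTo n hn := by rw [piecewise_eq_of_mem _ _ _ hn]; exact hX hn
  apply_fmin := by
    by_cases h : fmin X ∈ X
    · rw [piecewise_eq_of_mem _ _ _ h, hfmin]
    · exact piecewise_eq_of_notMem _ _ _ h
  apply_lt n hn hne := by rw [piecewise_eq_of_mem _ _ _ hn]; exact hlt n hn hne

end IsParentMap

/-- `b` is the child of the root whose subtree contains `a`. -/
def IsBranchOf (A : Finset ℕ) (p : ℕ → ℕ) (a b : ℕ) : Prop :=
  p b = fmin A ∧ b ≠ fmin A ∧ a ∈ hook A p b

noncomputable def branch (A : Finset ℕ) (p : ℕ → ℕ) (a : ℕ) : ℕ :=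
  Classical.epsilon (IsBranchOf A p a)

noncomputable def splitAt (A : Finset ℕ) (p : ℕ → ℕ) (b : ℕ) :
    Σ _ : Finset ℕ, (ℕ → ℕ) × (ℕ → ℕ) :=
  ⟨hook A p b, (hook A p b).piecewise (update p b b) id,
    (A \ hook A p b).piecewise (update p b b) id⟩

noncomputable def glue (A B : Finset ℕ) (q s : ℕ → ℕ) : ℕ → ℕ :=
  update (B.piecewise q s) (fmin B) (fmin A)

namespace IsParentMap

variable {A : Finset ℕ} {p : ℕ → ℕ} {a : ℕ}

lemma exists_isBranchOf (hp : IsParentMap A p) (ha : a ∈ A) (ha' : a ≠ fmin A) :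
    ∃ b, IsBranchOf A p a b := by
  induction a using Nat.strong_induction_on with
  | _ a ih =>
    by_cases hpa : p a = fmin A
    · exact ⟨a, hpa, ha', self_mem_hook p ha⟩
    · obtain ⟨b, hb, hbr, hab⟩ := ih _ (hp.apply_lt a ha ha') (hp.mapsTo a ha) hpa
      obtain ⟨-, k, hk⟩ := mem_hook.1 hab
      exact ⟨b, hb, hbr, mem_hook.2 ⟨ha, k + 1, hk⟩⟩

lemma isBranchOf_unique (hp : IsParentMap A p) {b b' : ℕ} (h : IsBranchOf A p a b)
    (h' : IsBranchOf A p a b') : b = b' := by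
  obtain ⟨hb, hbr, hab⟩ := h
  obtain ⟨hb', hbr', hab'⟩ := h'
  obtain ⟨-, k, hk⟩ := mem_hook.1 hab
  obtain ⟨-, k', hk'⟩ := mem_hook.1 hab'
  clear hab hab'
  wlog hkk : k ≤ k' generalizing b b' k k'
  · exact (this hb' hbr' hb hbr k' hk' k hk (by omega)).symm
  have hpath : p^[k' - k] b = b' := by
    rw [← hk, ← iterate_add_apply, Nat.sub_add_cancel hkk, hk']
  rcases iterate_apply_eq_or_eq hb hp.apply_fmin (k' - k) with h | h
  · exact h.symm.trans hpath
  · exact absurd (h.symm.trans hpath).symm hbr'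

lemma isBranchOf_branch (hp : IsParentMap A p) (ha : a ∈ A) (ha' : a ≠ fmin A) :
    IsBranchOf A p a (branch A p a) :=
  Classical.epsilon_spec (hp.exists_isBranchOf ha ha')

lemma branch_eq (hp : IsParentMap A p) {b : ℕ} (h : IsBranchOf A p a b) : branch A p a = b :=
  hp.isBranchOf_unique (Classical.epsilon_spec ⟨b, h⟩) h

variable {b : ℕ}

lemma mem_hook_self (hp : IsParentMap A p) (hb : p b = fmin A) (hbr : b ≠ fmin A) :
    b ∈ hook A p b :=
  self_mem_hook p (hp.mem_of_apply_eq_fmin hb hbr)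

lemma fmin_hook (hp : IsParentMap A p) (hb : p b = fmin A) (hbr : b ≠ fmin A) :
    fmin (hook A p b) = b :=
  fmin_eq_of_forall_le (hp.mem_hook_self hb hbr) fun n hn => by
    obtain ⟨hnA, k, rfl⟩ := mem_hook.1 hn
    exact hp.iterate_le hnA k

lemma fmin_notMem_hook (hp : IsParentMap A p) (hbr : b ≠ fmin A) : fmin A ∉ hook A p b :=
  fun h => by
    obtain ⟨-, k, hk⟩ := mem_hook.1 h
    exact hbr (hk ▸ iterate_fixed hp.apply_fmin k)

lemma mapsTo_update_hook (hp : IsParentMap A p) (hb : p b = fmin A) (hbr : b ≠ fmin A) :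
    Set.MapsTo (update p b b) (hook A p b) (hook A p b) := by
  intro n hn
  obtain ⟨hnA, k, hk⟩ := mem_hook.1 hn
  by_cases hnb : n = b
  · rw [hnb, update_self]
    exact hp.mem_hook_self hb hbr
  · rw [update_of_ne hnb]
    cases k with
    | zero => exact absurd hk hnb
    | succ k => exact mem_hook.2 ⟨hp.mapsTo n hnA, k, hk⟩

lemma mapsTo_update_sdiff_hook (hp : IsParentMap A p) (hb : p b = fmin A) (hbr : b ≠ fmin A) :
    Set.MapsTo (update p b b) ↑(A \ hook A p b) ↑(A \ hook A p b) := by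
  intro n hn
  obtain ⟨hnA, hnB⟩ := mem_sdiff.1 hn
  rw [Finset.mem_coe, update_of_ne (ne_of_mem_of_not_mem (hp.mem_hook_self hb hbr) hnB).symm,
    mem_sdiff]
  refine ⟨hp.mapsTo n hnA, fun h => hnB ?_⟩
  obtain ⟨-, k, hk⟩ := mem_hook.1 h
  exact mem_hook.2 ⟨hnA, k + 1, hk⟩

lemma isParentMap_hook (hp : IsParentMap A p) (hb : p b = fmin A) (hbr : b ≠ fmin A) :
    IsParentMap (hook A p b) ((hook A p b).piecewise (update p b b) id) := by
  refine .piecewise (hp.mapsTo_update_hook hb hbr) ?_ fun n hn hne => ?_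
  · rw [hp.fmin_hook hb hbr, update_self]
  · rw [hp.fmin_hook hb hbr] at hne
    rw [update_of_ne hne]
    exact hp.apply_lt n (hook_subset A p b hn) fun h => hp.fmin_notMem_hook hbr (h ▸ hn)

lemma isParentMap_sdiff_hook (hp : IsParentMap A p) (hb : p b = fmin A) (hbr : b ≠ fmin A) :
    IsParentMap (A \ hook A p b) ((A \ hook A p b).piecewise (update p b b) id) := by
  have hfmin : fmin (A \ hook A p b) = fmin A :=
    fmin_sdiff ⟨b, hp.mem_of_apply_eq_fmin hb hbr⟩ (hp.fmin_notMem_hook hbr)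
  refine .piecewise (hp.mapsTo_update_sdiff_hook hb hbr) ?_ fun n hn hne => ?_
  · rw [hfmin, update_of_ne hbr.symm, hp.apply_fmin]
  · obtain ⟨hnA, hnB⟩ := mem_sdiff.1 hn
    rw [update_of_ne (ne_of_mem_of_not_mem (hp.mem_hook_self hb hbr) hnB).symm]
    exact hp.apply_lt n hnA (hfmin ▸ hne)

lemma hook_eq_hook_update (hp : IsParentMap A p) (hb : p b = fmin A) {v : ℕ} (hvb : v ≠ b)
    (hvr : v ≠ fmin A) : hook A p v = hook A (update p b b) v :=
  filter_congr fun _ _ => (exists_iterate_update_self_iff fun n hn =>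
    (iterate_apply_eq_or_eq hb hp.apply_fmin n).elim (fun h => hvb (hn.symm.trans h))
      fun h => hvr (hn.symm.trans h)).symm

lemma hookFactor_eq_hookFactor_piecewise {R : Type*} [CommRing R] (x : ℕ → R)
    (y : ℕ → ℕ → R) (hp : IsParentMap A p) (hb : p b = fmin A) {X : Finset ℕ} (hXA : X ⊆ A)
    (hX : Set.MapsTo (update p b b) X X) (hAX : Set.MapsTo (update p b b) ↑(A \ X) ↑(A \ X))
    {v : ℕ} (hv : v ∈ X) (hvb : v ≠ b) (hvr : v ≠ fmin A) :
    hookFactor x y A p v = hookFactor x y X (X.piecewise (update p b b) id) v := by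
  rw [hookFactor, hookFactor, piecewise_eq_of_mem _ _ _ hv, update_of_ne hvb,
    hp.hook_eq_hook_update hb hvb hvr, hook_eq_hook_piecewise hXA hX hAX hv]

lemma weight_eq {R : Type*} [CommRing R] (x : ℕ → R) (y : ℕ → ℕ → R) (hp : IsParentMap A p)
    (hb : p b = fmin A) (hbr : b ≠ fmin A) :
    weight x y A p = x (fmin A) * (∑ j ∈ hook A p b, y (fmin (hook A p b)) j) *
      weight x y (hook A p b) ((hook A p b).piecewise (update p b b) id) *
      weight x y (A \ hook A p b) ((A \ hook A p b).piecewise (update p b b) id) := by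
  set B := hook A p b
  have hbB : b ∈ B := hp.mem_hook_self hb hbr
  have hrB : fmin A ∉ B := hp.fmin_notMem_hook hbr
  have hBA : B ⊆ A := hook_subset A p b
  have hmapsB := hp.mapsTo_update_hook hb hbr
  have hmapsC := hp.mapsTo_update_sdiff_hook hb hbr
  have hverts : A \ {fmin A} = B ∪ (A \ B) \ {fmin A} := by
    ext v
    simp only [mem_sdiff, mem_union, mem_singleton]
    by_cases hv : v ∈ B
    · simp [hv, hBA hv, ne_of_mem_of_not_mem hv hrB]
    · simp [hv]
  have hdisj : Disjoint B ((A \ B) \ {fmin A}) :=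
    disjoint_left.2 fun v hvB hvC => (mem_sdiff.1 (mem_sdiff.1 hvC).1).2 hvB
  rw [weight, hverts, prod_union hdisj, ← mul_prod_erase B _ hbB, ← sdiff_singleton_eq_erase,
    weight, weight, hp.fmin_hook hb hbr, fmin_sdiff ⟨b, hBA hbB⟩ hrB, hookFactor, hb]
  rw [prod_congr rfl fun v hv => hookFactor_eq_hookFactor_piecewise x y hp hb hBA hmapsB hmapsC
    (mem_sdiff.1 hv).1 (by simpa using (mem_sdiff.1 hv).2)
    (ne_of_mem_of_not_mem (mem_sdiff.1 hv).1 hrB)]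
  rw [prod_congr rfl fun v hv => hookFactor_eq_hookFactor_piecewise x y hp hb sdiff_subset hmapsC
    (by rwa [Finset.sdiff_sdiff_eq_self hBA]) (mem_sdiff.1 hv).1
    (ne_of_mem_of_not_mem hbB (mem_sdiff.1 (mem_sdiff.1 hv).1).2).symm
    (by simpa using (mem_sdiff.1 hv).2)]

lemma glue_splitAt (hp : IsParentMap A p) (hb : p b = fmin A) (hbr : b ≠ fmin A) :
    glue A (splitAt A p b).1 (splitAt A p b).2.1 (splitAt A p b).2.2 = p := by
  have hbA := hp.mem_of_apply_eq_fmin hb hbr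
  have hcut : (hook A p b).piecewise ((hook A p b).piecewise (update p b b) id)
      ((A \ hook A p b).piecewise (update p b b) id) = update p b b := by
    funext n
    by_cases hnB : n ∈ hook A p b
    · simp [hnB]
    · by_cases hnA : n ∈ A
      · simp [hnB, hnA]
      · simp [hnB, hnA, update_of_ne (ne_of_mem_of_not_mem hbA hnA).symm,
          hp.apply_of_notMem n hnA]
  rw [splitAt, glue, hcut, hp.fmin_hook hb hbr, update_idem, ← hb, update_eq_self]

end IsParentMap

section Glue

variable {A B : Finset ℕ} {q s : ℕ → ℕ}

lemma glue_of_notMem (hB : B.Nonempty) {n : ℕ} (hnB : n ∉ B) : glue A B q s n = s n := by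
  rw [glue, update_of_ne (ne_of_mem_of_not_mem (fmin_mem hB) hnB).symm,
    piecewise_eq_of_notMem _ _ _ hnB]

lemma glue_of_mem_of_ne {n : ℕ} (hnB : n ∈ B) (hnm : n ≠ fmin B) : glue A B q s n = q n := by
  rw [glue, update_of_ne hnm, piecewise_eq_of_mem _ _ _ hnB]

lemma isParentMap_glue (hBA : B ⊆ A) (hB : B.Nonempty) (hrB : fmin A ∉ B)
    (hq : IsParentMap B q) (hs : IsParentMap (A \ B) s) : IsParentMap A (glue A B q s) := by
  have hmB := fmin_mem hB
  have hrA : fmin A ∈ A := fmin_mem (hB.mono hBA)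
  have hfmin : fmin (A \ B) = fmin A := fmin_sdiff ⟨_, hrA⟩ hrB
  constructor
  · intro n hnA
    rw [glue_of_notMem hB fun h => hnA (hBA h), hs.apply_of_notMem n fun h => hnA (mem_sdiff.1 h).1]
  · intro n hnA
    by_cases hnB : n ∈ B
    · by_cases hnm : n = fmin B
      · rw [hnm, glue, update_self]; exact hrA
      · rw [glue_of_mem_of_ne hnB hnm]; exact hBA (hq.mapsTo n hnB)
    · rw [glue_of_notMem hB hnB]; exact (mem_sdiff.1 (hs.mapsTo n (mem_sdiff.2 ⟨hnA, hnB⟩))).1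
  · rw [glue_of_notMem hB hrB, ← hfmin, hs.apply_fmin]
  · intro n hnA hnr
    by_cases hnB : n ∈ B
    · by_cases hnm : n = fmin B
      · rw [hnm, glue, update_self]
        exact (fmin_le (hBA hmB)).lt_of_ne (ne_of_mem_of_not_mem hmB hrB).symm
      · rw [glue_of_mem_of_ne hnB hnm]; exact hq.apply_lt n hnB hnm
    · rw [glue_of_notMem hB hnB]; exact hs.apply_lt n (mem_sdiff.2 ⟨hnA, hnB⟩) (hfmin ▸ hnr)

lemma hook_glue (hBA : B ⊆ A) (hB : B.Nonempty) (hq : IsParentMap B q)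
    (hs : IsParentMap (A \ B) s) : hook A (glue A B q s) (fmin B) = B := by
  have hinv : Set.MapsTo (glue A B q s) ↑(A \ B) ↑(A \ B) := fun n hn => by
    rw [Finset.mem_coe, glue_of_notMem hB (mem_sdiff.1 hn).2]
    exact hs.mapsTo n hn
  ext n
  rw [mem_hook]
  constructor
  · rintro ⟨hnA, k, hk⟩
    by_contra hnB
    exact (mem_sdiff.1 (hinv.iterate k (mem_sdiff.2 ⟨hnA, hnB⟩))).2 (hk ▸ fmin_mem hB)
  · intro hnB
    refine ⟨hBA hnB, exists_iterate_eq_of_forall_lt (S := B) (fun m hm hmm => ?_) hnB⟩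
    rw [glue_of_mem_of_ne hm hmm]
    exact ⟨hq.mapsTo m hm, hq.apply_lt m hm hmm⟩

lemma splitAt_glue (hBA : B ⊆ A) (hB : B.Nonempty) (hq : IsParentMap B q)
    (hs : IsParentMap (A \ B) s) : splitAt A (glue A B q s) (fmin B) = ⟨B, q, s⟩ := by
  have hmB := fmin_mem hB
  rw [splitAt, hook_glue hBA hB hq hs, glue, update_idem,
    update_eq_self_iff.2 (by rw [piecewise_eq_of_mem _ _ _ hmB, hq.apply_fmin])]
  simp only [Sigma.mk.injEq, heq_eq_eq, true_and, Prod.mk.injEq]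
  constructor
  · funext n
    by_cases hnB : n ∈ B
    · simp [hnB]
    · simp [hnB, hq.apply_of_notMem n hnB]
  · funext n
    by_cases hnC : n ∈ A \ B
    · simp [hnC, (mem_sdiff.1 hnC).2]
    · simp [hnC, hs.apply_of_notMem n hnC]

lemma branch_glue (hBA : B ⊆ A) (hrB : fmin A ∉ B) (hq : IsParentMap B q)
    (hs : IsParentMap (A \ B) s) {a : ℕ} (haB : a ∈ B) : branch A (glue A B q s) a = fmin B :=
  (isParentMap_glue hBA ⟨a, haB⟩ hrB hq hs).branch_eq
    ⟨update_self _ _ _, ne_of_mem_of_not_mem (fmin_mem ⟨a, haB⟩) hrB,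
      (hook_glue hBA ⟨a, haB⟩ hq hs).symm ▸ haB⟩

end Glue

lemma sum_weight_eq_sum_splitAt {R : Type*} [CommRing R] (x : ℕ → R) (y : ℕ → ℕ → R)
    {A : Finset ℕ} {a : ℕ} (ha : a ∈ A) (ha' : a ≠ fmin A) :
    ∑ p ∈ trees A, weight x y A p =
      ∑ t ∈ (A.powerset.filter fun B => a ∈ B ∧ fmin A ∉ B).sigma
          (fun B => trees B ×ˢ trees (A \ B)),
        x (fmin A) * (∑ j ∈ t.1, y (fmin t.1) j) * weight x y t.1 t.2.1 *
          weight x y (A \ t.1) t.2.2 := by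
  have hmem (t : Σ _ : Finset ℕ, (ℕ → ℕ) × (ℕ → ℕ)) :
      t ∈ (A.powerset.filter fun B => a ∈ B ∧ fmin A ∉ B).sigma
          (fun B => trees B ×ˢ trees (A \ B)) ↔
        (t.1 ⊆ A ∧ a ∈ t.1 ∧ fmin A ∉ t.1) ∧ IsParentMap t.1 t.2.1 ∧
          IsParentMap (A \ t.1) t.2.2 := by
    simp only [mem_sigma, mem_filter, mem_powerset, mem_product, mem_trees]
  refine sum_bij' (fun p _ => splitAt A p (branch A p a)) (fun t _ => glue A t.1 t.2.1 t.2.2)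
    (fun p hp => ?_) (fun t ht => ?_) (fun p hp => ?_) (fun t ht => ?_) (fun p hp => ?_)
  · rw [mem_trees] at hp
    obtain ⟨hb, hbr, hab⟩ := hp.isBranchOf_branch ha ha'
    exact (hmem _).2 ⟨⟨hook_subset _ _ _, hab, hp.fmin_notMem_hook hbr⟩,
      hp.isParentMap_hook hb hbr, hp.isParentMap_sdiff_hook hb hbr⟩
  · obtain ⟨⟨hBA, haB, hrB⟩, hq, hs⟩ := (hmem t).1 ht
    exact mem_trees.2 (isParentMap_glue hBA ⟨a, haB⟩ hrB hq hs)
  · rw [mem_trees] at hp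
    obtain ⟨hb, hbr, -⟩ := hp.isBranchOf_branch ha ha'
    exact hp.glue_splitAt hb hbr
  · obtain ⟨⟨hBA, haB, hrB⟩, hq, hs⟩ := (hmem t).1 ht
    rw [branch_glue hBA hrB hq hs haB, splitAt_glue hBA ⟨a, haB⟩ hq hs]
  · rw [mem_trees] at hp
    obtain ⟨hb, hbr, -⟩ := hp.isBranchOf_branch ha ha'
    exact hp.weight_eq x y hb hbr

open scoped Classical in
theorem ThetaA_recursion_general {R : Type*} [CommRing R] (x : ℕ → R) (y : ℕ → ℕ → R)
    (A : Finset ℕ) (a : ℕ) (ha : a ∈ A) (ha' : a ≠ fmin A) :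
    ThetaA x y A = ∑ B ∈ A.powerset.filter (fun B => a ∈ B ∧ fmin A ∉ B),
      x (fmin A) * (∑ j ∈ B, y (fmin B) j) * ThetaA x y B * ThetaA x y (A \ B) := by
  rw [ThetaA_eq_sum_weight, sum_weight_eq_sum_splitAt x y ha ha', sum_sigma]
  refine sum_congr rfl fun B _ => ?_
  rw [ThetaA_eq_sum_weight, ThetaA_eq_sum_weight, sum_product]
  simp only [← sum_mul, ← mul_sum]

open scoped Classical in
/-- Recursion for the hook-sum generating function `Θ_A` (Proposition 3.3):
for `|A| ≥ 2` and a fixed `a ∈ A ∖ {min A}`,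
`Θ_A = ∑_{B ⊔ C = A, min A ∈ C, a ∈ B} x_{min A} (∑_{j∈B} y_{min B, j}) Θ_B Θ_C`. -/
theorem ThetaA_recursion {R : Type*} [CommRing R] (x : ℕ → R) (y : ℕ → ℕ → R)
    (A : Finset ℕ) (hA : 2 ≤ A.card) (hpos : ∀ i ∈ A, 0 < i)
    (a : ℕ) (ha : a ∈ A) (ha' : a ≠ fmin A) :
    ThetaA x y A = ∑ B ∈ A.powerset.filter (fun B => a ∈ B ∧ fmin A ∉ B),
      x (fmin A) * (∑ j ∈ B, y (fmin B) j) * ThetaA x y B * ThetaA x y (A \ B) :=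
  ThetaA_recursion_general x y A a ha ha'
end

section
/- Unsorting bijection (Theorem 2.1): for a finite set A of positive integers and nonnegative integers i ≥ 0, j ≥ 1, there is a weight-preserving bijection between L_{i,j}(A) and L_{i+1,j-1}(A). In particular |L_{i,j}(A)| = |L_{i+1,j-1}(A)|, and the weight generating functions ∑_{(T,φ)∈L_{i,j}(A)} ω(T,φ) and ∑_{(T,φ)∈L_{i+1,j-1}(A)} ω(T,φ) are equal. -/
open MvPolynomial

open scoped Classical in
/-- The hook of `v` in the tree on the vertex set `A` with parent function `p`. -/
noncomputable def hookS {A : Finset ℕ} (p : ↥A → ↥A) (v : ↥A) : Finset ↥A :=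
  Finset.univ.filter fun u => ∃ k : ℕ, p^[k] u = v

open scoped Classical in
/-- The set `L_{i,j}(A)`: pairs `(T, φ)`, where `T` is a labelled tree on `A` rooted at
`min A` (encoded by a parent function `t.1` fixing the root, from which every vertex reaches
the root) and `φ = t.2` maps the increasing vertices (`f_T(v) < v`) into `A` (normalized by
`φ v = v` on the root and the decreasing vertices), subject to conditions (1)–(5) of the
paper; in particular `T` has exactly `i` decreasing vertices and exactly `j` increasing
vertices with `φ v ≠ v`. -/
noncomputable def Lset (A : Finset ℕ) (i j : ℕ) : Finset ((↥A → ↥A) × (↥A → ↥A)) :=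
  Finset.univ.filter fun t =>
    (∀ v : ↥A, (v : ℕ) = fmin A → t.1 v = v) ∧
    (∀ v : ↥A, ∃ k : ℕ, (((t.1)^[k] v : ↥A) : ℕ) = fmin A) ∧
    (∀ v : ↥A, ¬ ((t.1 v : ℕ) < (v : ℕ)) → t.2 v = v) ∧
    (∀ v : ↥A, (t.1 v : ℕ) < (v : ℕ) → t.2 v ∈ hookS t.1 v ∧ (v : ℕ) ≤ (t.2 v : ℕ)) ∧
    (∀ v : ↥A, (t.1 v : ℕ) < (v : ℕ) → t.2 v ≠ v →
      ∀ u : ↥A, (∃ k : ℕ, (t.1)^[k] v = u) → (u : ℕ) ≠ fmin A → (t.1 u : ℕ) < (u : ℕ)) ∧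
    (∀ v u : ↥A, (v : ℕ) < (t.1 v : ℕ) → (t.1 u : ℕ) < (u : ℕ) → t.2 u ≠ u →
      (u : ℕ) < (v : ℕ)) ∧
    (Finset.univ.filter fun v : ↥A => (v : ℕ) < (t.1 v : ℕ)).card = i ∧
    (Finset.univ.filter fun v : ↥A => (t.1 v : ℕ) < (v : ℕ) ∧ t.2 v ≠ v).card = j

open scoped Classical in
/-- The weight `ω(T, φ) = ∏_{increasing v} x_{f_T(v)} y_{v, φ(v)} · ∏_{decreasing v} x_v y_{v, f_T(v)}`,
valued in the polynomial ring with `X (.inl i) = x_i` and `X (.inr (i,j)) = y_{i,j}`. -/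
noncomputable def omegaL (A : Finset ℕ) (t : (↥A → ↥A) × (↥A → ↥A)) :
    MvPolynomial (ℕ ⊕ ℕ × ℕ) ℤ :=
  (∏ v ∈ Finset.univ.filter fun v : ↥A => (t.1 v : ℕ) < (v : ℕ),
      X (Sum.inl (t.1 v : ℕ)) * X (Sum.inr ((v : ℕ), (t.2 v : ℕ)))) *
    ∏ v ∈ Finset.univ.filter fun v : ↥A => (v : ℕ) < (t.1 v : ℕ),
      X (Sum.inl (v : ℕ)) * X (Sum.inr ((v : ℕ), (t.1 v : ℕ)))

/-!
Let `v` be the largest increasing vertex with `φ v ≠ v` and `c` the child of `v` on the path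
from `φ v` down to `v`. Unsorting hangs `v` below `φ v`, so that `v` becomes decreasing with
trivial label, and hangs `c` on the old parent of `v`. By (6) every decreasing vertex lies above
`v`; hence the vertices below `v` are closed under taking parents and are not touched by the
move, and the path from `φ v` stays above `v` until it reaches `c`. This keeps (1)–(6) intact,
and the weight is unchanged because `x_{f v} y_{v,φ v} · x_v y_{c,c}` becomes
`x_v y_{v,φ v} · x_{f v} y_{c,c}`. Conversely, `v` is the smallest decreasing vertex of the new
tree and `c` is the last vertex above `v` on the path from its new parent `φ v`, so the move can
be undone.
-/

open Function Finset

namespace Unsorting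

variable {α : Type*}

def Reaches (f : α → α) (a b : α) : Prop := ∃ k, f^[k] a = b

lemma iterate_eq_of_forall_lt {f g : α → α} {x : α} {n : ℕ}
    (h : ∀ l < n, g (f^[l] x) = f (f^[l] x)) : g^[n] x = f^[n] x := by
  induction n with
  | zero => rfl
  | succ n ih =>
    rw [iterate_succ_apply', iterate_succ_apply', ih fun l hl => h l (by omega), h n n.lt_succ_self]

lemma iterate_eq_of_eqOn {f g : α → α} {s : Set α} (hs : Set.MapsTo f s s) (hfg : Set.EqOn g f s)
    {x : α} (hx : x ∈ s) (n : ℕ) : g^[n] x = f^[n] x :=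
  iterate_eq_of_forall_lt fun l _ => hfg (hs.iterate l hx)

namespace Reaches

variable {f g : α → α} {a b c : α}

lemma refl (f : α → α) (a : α) : Reaches f a a := ⟨0, rfl⟩

lemma trans (hab : Reaches f a b) (hbc : Reaches f b c) : Reaches f a c := by
  obtain ⟨k, rfl⟩ := hab
  obtain ⟨l, rfl⟩ := hbc
  exact ⟨l + k, iterate_add_apply f l k a⟩

lemma of_skip {v : α} {m : ℕ} (hstep : ∀ y, y ≠ v → Reaches g y (f y))
    (hskip : Reaches g v (f^[m + 1] v)) (hb : ∀ l, 0 < l → l ≤ m → f^[l] v ≠ b)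
    (hab : Reaches f a b) : Reaches g a b := by
  obtain ⟨k, hk⟩ := hab
  induction k using Nat.strong_induction_on generalizing a with
  | _ k ih =>
    rcases k with _ | k
    · exact ⟨0, hk⟩
    rcases eq_or_ne a v with rfl | hav
    · have hmk : m ≤ k := by
        by_contra hkm
        exact hb (k + 1) k.succ_pos (by omega) hk
      refine hskip.trans (ih (k - m) (by omega) ?_)
      rw [← iterate_add_apply, show k - m + (m + 1) = k + 1 by omega, hk]
    · exact (hstep a hav).trans (ih k k.lt_succ_self (by rwa [iterate_succ_apply] at hk))

lemma of_eqOn {f g : α → α} {s : Set α} (hs : Set.MapsTo f s s) (hfg : Set.EqOn g f s)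
    {x u : α} (hx : x ∈ s) (hxu : Reaches g x u) : Reaches f x u ∧ u ∈ s := by
  obtain ⟨k, rfl⟩ := hxu
  rw [iterate_eq_of_eqOn hs hfg hx k]
  exact ⟨⟨k, rfl⟩, hs.iterate k hx⟩

end Reaches

section Moves

variable [DecidableEq α] {t : (α → α) × (α → α)} {v c x : α}

def unsortAt (t : (α → α) × (α → α)) (v c : α) : (α → α) × (α → α) :=
  (update (update t.1 c (t.1 v)) v (t.2 v), update t.2 v v)

def sortAt (t : (α → α) × (α → α)) (v c : α) : (α → α) × (α → α) :=
  (update (update t.1 c v) v (t.1 c), update t.2 v (t.1 v))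

@[simp] lemma unsortAt_fst_self : (unsortAt t v c).1 v = t.2 v := update_self ..

lemma unsortAt_fst_child (hcv : c ≠ v) : (unsortAt t v c).1 c = t.1 v := by
  simp [unsortAt, hcv]

lemma unsortAt_fst_of_ne (hv : x ≠ v) (hc : x ≠ c) : (unsortAt t v c).1 x = t.1 x := by
  simp [unsortAt, hv, hc]

@[simp] lemma unsortAt_snd_self : (unsortAt t v c).2 v = v := update_self ..

lemma unsortAt_snd_of_ne (hv : x ≠ v) : (unsortAt t v c).2 x = t.2 x := update_of_ne hv ..

@[simp] lemma sortAt_fst_self : (sortAt t v c).1 v = t.1 c := update_self ..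

lemma sortAt_fst_child (hcv : c ≠ v) : (sortAt t v c).1 c = v := by
  simp [sortAt, hcv]

lemma sortAt_fst_of_ne (hv : x ≠ v) (hc : x ≠ c) : (sortAt t v c).1 x = t.1 x := by
  simp [sortAt, hv, hc]

@[simp] lemma sortAt_snd_self : (sortAt t v c).2 v = t.1 v := update_self ..

lemma sortAt_snd_of_ne (hv : x ≠ v) : (sortAt t v c).2 x = t.2 x := update_of_ne hv ..

lemma sortAt_unsortAt (hcv : c ≠ v) (hc : t.1 c = v) : sortAt (unsortAt t v c) v c = t := by
  ext x
  · rcases eq_or_ne x v with rfl | hxv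
    · simp [unsortAt_fst_child hcv]
    rcases eq_or_ne x c with rfl | hxc
    · rw [sortAt_fst_child hcv, hc]
    · rw [sortAt_fst_of_ne hxv hxc, unsortAt_fst_of_ne hxv hxc]
  · rcases eq_or_ne x v with rfl | hxv
    · simp
    · rw [sortAt_snd_of_ne hxv, unsortAt_snd_of_ne hxv]

lemma unsortAt_sortAt (hcv : c ≠ v) (hv : t.2 v = v) : unsortAt (sortAt t v c) v c = t := by
  ext x
  · rcases eq_or_ne x v with rfl | hxv
    · simp
    rcases eq_or_ne x c with rfl | hxc
    · rw [unsortAt_fst_child hcv, sortAt_fst_self]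
    · rw [unsortAt_fst_of_ne hxv hxc, sortAt_fst_of_ne hxv hxc]
  · rcases eq_or_ne x v with rfl | hxv
    · simp [hv]
    · rw [unsortAt_snd_of_ne hxv, sortAt_snd_of_ne hxv]

end Moves

section LinearOrder

variable [LinearOrder α]

lemma mapsTo_Iio_of_forall_lt {p : α → α} {v : α} (h : ∀ x, x < p x → v ≤ x) :
    Set.MapsTo p (Set.Iio v) (Set.Iio v) := fun y (hy : y < v) =>
  lt_of_le_of_lt (not_lt.1 fun hlt => (h y hlt).not_gt hy) hy

section LastAbove

variable {f g : α → α} {v x : α} {n : ℕ}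

/-- The last point of the orbit of `x` before it leaves `Set.Ioi v` (junk value `x` if it never
does). -/
noncomputable def lastAbove (f : α → α) (v x : α) : α := f^[sInf {n | ¬ v < f^[n + 1] x}] x

lemma exists_forall_le_lt_iterate {k : ℕ} (hx : v < x) (hk : ¬ v < f^[k] x) :
    ∃ n, (∀ l ≤ n, v < f^[l] x) ∧ ¬ v < f^[n + 1] x := by
  classical
  have hex : ∃ k, ¬ v < f^[k] x := ⟨k, hk⟩
  have hpos : 0 < Nat.find hex := Nat.pos_of_ne_zero fun h0 => Nat.find_spec hex (h0 ▸ hx)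
  refine ⟨Nat.find hex - 1, fun l hl => not_not.1 (Nat.find_min hex (by omega)), ?_⟩
  rw [Nat.sub_add_cancel hpos]
  exact Nat.find_spec hex

lemma lastAbove_eq (hpath : ∀ l ≤ n, v < f^[l] x) (hexit : ¬ v < f^[n + 1] x) :
    lastAbove f v x = f^[n] x := by
  have : sInf {n | ¬ v < f^[n + 1] x} = n :=
    le_antisymm (Nat.sInf_le hexit) <| le_csInf ⟨n, hexit⟩ fun k hk =>
      not_lt.1 fun hkn => hk (hpath (k + 1) hkn)
  rw [lastAbove, this]

lemma iterate_eq_before_exit (hpath : ∀ l ≤ n, v < f^[l] x) (hexit : ¬ v < f^[n + 1] x)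
    (hg : ∀ y, v < y → y ≠ f^[n] x → g y = f y) {l : ℕ} (hl : l ≤ n) : g^[l] x = f^[l] x :=
  iterate_eq_of_forall_lt fun k hk => hg _ (hpath k (by omega)) fun heq =>
    hexit (by
      rw [iterate_succ_apply', ← heq, ← iterate_succ_apply' f k x]
      exact hpath (k + 1) (by omega))

end LastAbove

structure IsLabelling (p φ : α → α) (r : α) : Prop where
  root_le : ∀ x, r ≤ x
  map_root : p r = r
  reaches_root : ∀ x, Reaches p x r
  label_eq_of_not_lt : ∀ x, ¬ p x < x → φ x = x
  reaches_label : ∀ x, p x < x → Reaches p (φ x) x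
  le_label : ∀ x, p x < x → x ≤ φ x
  parent_lt_of_reaches : ∀ x, p x < x → φ x ≠ x → ∀ u, Reaches p x u → u ≠ r → p u < u
  lt_of_lt_parent : ∀ x u, x < p x → p u < u → φ u ≠ u → u < x

namespace IsLabelling

variable {p φ : α → α} {r x : α}

lemma eq_root_of_iterate_eq_self (h : IsLabelling p φ r) {d : ℕ} (hd : 0 < d)
    (hx : p^[d] x = x) : x = r := by
  obtain ⟨k, hk⟩ := h.reaches_root x
  have hper : IsPeriodicPt p d x := hx
  rw [← hper.mul_const k |>.eq, ← Nat.sub_add_cancel (Nat.le_mul_of_pos_left k hd),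
    iterate_add_apply, hk, iterate_fixed h.map_root]

lemma parent_ne_self (h : IsLabelling p φ r) (hx : x ≠ r) : p x ≠ x :=
  fun hfix => hx (h.eq_root_of_iterate_eq_self one_pos hfix)

end IsLabelling

/-- The picture at `v` before the move: the path `φ v, …, p^[n] (φ v) = c` stays above `v` and
enters `v` through its child `c`. `IsSortSite` is the same picture after the move, where `v`
hangs below `φ v`. -/
structure IsUnsortSite (p φ : α → α) (r v c : α) (n : ℕ) : Prop where
  labelling : IsLabelling p φ r
  parent_lt : p v < v
  lt_label : v < φ v
  le_of_moved : ∀ x, p x < x → φ x ≠ x → x ≤ v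
  lt_path : ∀ l ≤ n, v < p^[l] (φ v)
  path_end : p^[n] (φ v) = c
  parent_child : p c = v

namespace IsUnsortSite

variable {p φ : α → α} {r v c x : α} {n : ℕ}

lemma lt_child (h : IsUnsortSite p φ r v c n) : v < c := h.path_end ▸ h.lt_path n le_rfl

lemma child_ne (h : IsUnsortSite p φ r v c n) : c ≠ v := h.lt_child.ne'

lemma root_lt (h : IsUnsortSite p φ r v c n) : r < v :=
  (h.labelling.root_le v).lt_of_ne fun hrv => h.parent_lt.ne (hrv ▸ h.labelling.map_root)

lemma label_child (h : IsUnsortSite p φ r v c n) : φ c = c := by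
  by_contra hc
  exact (h.le_of_moved c (h.parent_child ▸ h.lt_child) hc).not_gt h.lt_child

lemma lt_of_lt_parent (h : IsUnsortSite p φ r v c n) (hx : x < p x) : v < x :=
  h.labelling.lt_of_lt_parent x v hx h.parent_lt h.lt_label.ne'

lemma mapsTo_Iio (h : IsUnsortSite p φ r v c n) : Set.MapsTo p (Set.Iio v) (Set.Iio v) :=
  mapsTo_Iio_of_forall_lt fun _ hx => (h.lt_of_lt_parent hx).le

lemma eqOn_Iio (h : IsUnsortSite p φ r v c n) : Set.EqOn (unsortAt (p, φ) v c).1 p (Set.Iio v) :=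
  fun _ (hy : _ < v) => unsortAt_fst_of_ne hy.ne (hy.trans h.lt_child).ne

lemma not_lt_exit (h : IsUnsortSite p φ r v c n) : ¬ v < p^[n + 1] (φ v) := by
  rw [iterate_succ_apply', h.path_end, h.parent_child]
  exact lt_irrefl v

lemma iterate_unsortAt (h : IsUnsortSite p φ r v c n) {l : ℕ} (hl : l ≤ n) :
    (unsortAt (p, φ) v c).1^[l] (φ v) = p^[l] (φ v) :=
  iterate_eq_before_exit h.lt_path h.not_lt_exit
    (fun _ hy hyc => unsortAt_fst_of_ne hy.ne' (h.path_end ▸ hyc)) hl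

lemma reaches_unsortAt (h : IsUnsortSite p φ r v c n) {a b : α} (hab : Reaches p a b)
    (hb : b ≠ v) : Reaches (unsortAt (p, φ) v c).1 a b := by
  have hskip : Reaches (unsortAt (p, φ) v c).1 c (p^[2] c) :=
    ⟨1, by rw [iterate_one, unsortAt_fst_child h.child_ne, iterate_succ_apply, iterate_one,
      h.parent_child]⟩
  refine Reaches.of_skip (fun y hyc => ?_) hskip ?_ hab
  · rcases eq_or_ne y v with rfl | hyv
    · refine ⟨n + 2, ?_⟩
      rw [iterate_succ_apply', iterate_succ_apply, unsortAt_fst_self, iterate_unsortAt h le_rfl,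
        h.path_end, unsortAt_fst_child h.child_ne]
    · exact ⟨1, unsortAt_fst_of_ne hyv hyc⟩
  · intro l hl hl1
    rw [show l = 1 by omega, iterate_one, h.parent_child]
    exact hb.symm

lemma unsortAt_snd_child (h : IsUnsortSite p φ r v c n) : (unsortAt (p, φ) v c).2 c = c :=
  (unsortAt_snd_of_ne h.child_ne).trans h.label_child

lemma ne_of_unsortAt_snd_ne (h : IsUnsortSite p φ r v c n)
    (hx : (unsortAt (p, φ) v c).2 x ≠ x) : x ≠ v ∧ x ≠ c :=
  ⟨by rintro rfl; exact hx unsortAt_snd_self, by rintro rfl; exact hx h.unsortAt_snd_child⟩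

lemma unsortAt_parent_lt_of_reaches (h : IsUnsortSite p φ r v c n) {u : α}
    (hx : (unsortAt (p, φ) v c).1 x < x) (hφx : (unsortAt (p, φ) v c).2 x ≠ x)
    (hxu : Reaches (unsortAt (p, φ) v c).1 x u) (hu : u ≠ r) :
    (unsortAt (p, φ) v c).1 u < u := by
  obtain ⟨hxv, hxc⟩ := h.ne_of_unsortAt_snd_ne hφx
  rw [unsortAt_fst_of_ne hxv hxc] at hx
  rw [unsortAt_snd_of_ne hxv] at hφx
  obtain ⟨hxu, hu_lt⟩ :=
    hxu.of_eqOn h.mapsTo_Iio h.eqOn_Iio ((h.le_of_moved x hx hφx).lt_of_ne hxv)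
  rw [h.eqOn_Iio hu_lt]
  exact h.labelling.parent_lt_of_reaches x hx hφx u hxu hu

lemma unsortAt_lt_of_lt_parent (h : IsUnsortSite p φ r v c n) {u : α}
    (hx : x < (unsortAt (p, φ) v c).1 x) (hu : (unsortAt (p, φ) v c).1 u < u)
    (hφu : (unsortAt (p, φ) v c).2 u ≠ u) : u < x := by
  obtain ⟨huv, huc⟩ := h.ne_of_unsortAt_snd_ne hφu
  rw [unsortAt_fst_of_ne huv huc] at hu
  rw [unsortAt_snd_of_ne huv] at hφu
  rcases eq_or_ne x v with rfl | hxv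
  · exact (h.le_of_moved u hu hφu).lt_of_ne huv
  rcases eq_or_ne x c with rfl | hxc
  · rw [unsortAt_fst_child h.child_ne] at hx
    exact absurd (hx.trans h.parent_lt) h.lt_child.not_gt
  · rw [unsortAt_fst_of_ne hxv hxc] at hx
    exact h.labelling.lt_of_lt_parent x u hx hu hφu

lemma isLabelling_unsortAt (h : IsUnsortSite p φ r v c n) :
    IsLabelling (unsortAt (p, φ) v c).1 (unsortAt (p, φ) v c).2 r where
  root_le := h.labelling.root_le
  map_root :=
    (unsortAt_fst_of_ne h.root_lt.ne (h.root_lt.trans h.lt_child).ne).trans h.labelling.map_root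
  reaches_root x := h.reaches_unsortAt (h.labelling.reaches_root x) h.root_lt.ne
  label_eq_of_not_lt x hx := by
    rcases eq_or_ne x v with rfl | hxv
    · exact unsortAt_snd_self
    rcases eq_or_ne x c with rfl | hxc
    · exact h.unsortAt_snd_child
    rw [unsortAt_fst_of_ne hxv hxc] at hx
    exact (unsortAt_snd_of_ne hxv).trans (h.labelling.label_eq_of_not_lt x hx)
  reaches_label x hx := by
    rcases eq_or_ne x v with rfl | hxv
    · exact absurd h.lt_label (by simpa using hx.not_gt)
    rcases eq_or_ne x c with rfl | hxc
    · rw [h.unsortAt_snd_child]; exact Reaches.refl _ _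
    rw [unsortAt_fst_of_ne hxv hxc] at hx
    rw [unsortAt_snd_of_ne hxv]
    exact h.reaches_unsortAt (h.labelling.reaches_label x hx) hxv
  le_label x hx := by
    rcases eq_or_ne x v with rfl | hxv
    · exact absurd h.lt_label (by simpa using hx.not_gt)
    rcases eq_or_ne x c with rfl | hxc
    · rw [h.unsortAt_snd_child]
    rw [unsortAt_fst_of_ne hxv hxc] at hx
    rw [unsortAt_snd_of_ne hxv]
    exact h.labelling.le_label x hx
  parent_lt_of_reaches _ hx hφx _ := h.unsortAt_parent_lt_of_reaches hx hφx
  lt_of_lt_parent _ _ := h.unsortAt_lt_of_lt_parent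

end IsUnsortSite

structure IsSortSite (p φ : α → α) (r v c : α) (n : ℕ) : Prop where
  labelling : IsLabelling p φ r
  lt_parent : v < p v
  le_of_lt_parent : ∀ x, x < p x → v ≤ x
  lt_path : ∀ l ≤ n, v < p^[l] (p v)
  path_end : p^[n] (p v) = c
  parent_lt : p c < v

namespace IsSortSite

variable {p φ : α → α} {r v c x : α} {n : ℕ}

lemma lt_child (h : IsSortSite p φ r v c n) : v < c := h.path_end ▸ h.lt_path n le_rfl

lemma child_ne (h : IsSortSite p φ r v c n) : c ≠ v := h.lt_child.ne'

lemma root_lt (h : IsSortSite p φ r v c n) : r < v :=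
  (h.labelling.root_le v).lt_of_ne fun hrv => h.lt_parent.ne' (hrv ▸ h.labelling.map_root)

lemma label_self (h : IsSortSite p φ r v c n) : φ v = v :=
  h.labelling.label_eq_of_not_lt v h.lt_parent.le.not_gt

lemma lt_of_moved (h : IsSortSite p φ r v c n) (hx : p x < x) (hφx : φ x ≠ x) : x < v :=
  h.labelling.lt_of_lt_parent v x h.lt_parent hx hφx

lemma label_child (h : IsSortSite p φ r v c n) : φ c = c := by
  by_contra hc
  exact (h.lt_of_moved (h.parent_lt.trans h.lt_child) hc).not_gt h.lt_child

lemma parent_lt_of_lt (h : IsSortSite p φ r v c n) (hx : x < v) (hxr : x ≠ r) : p x < x :=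
  (not_lt.1 fun hlt => (h.le_of_lt_parent x hlt).not_gt hx).lt_of_ne
    (h.labelling.parent_ne_self hxr)

lemma mapsTo_Iio (h : IsSortSite p φ r v c n) : Set.MapsTo p (Set.Iio v) (Set.Iio v) :=
  mapsTo_Iio_of_forall_lt h.le_of_lt_parent

lemma eqOn_Iio (h : IsSortSite p φ r v c n) : Set.EqOn (sortAt (p, φ) v c).1 p (Set.Iio v) :=
  fun _ (hy : _ < v) => sortAt_fst_of_ne hy.ne (hy.trans h.lt_child).ne

lemma not_lt_exit (h : IsSortSite p φ r v c n) : ¬ v < p^[n + 1] (p v) := by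
  rw [iterate_succ_apply', h.path_end]
  exact h.parent_lt.not_gt

lemma iterate_sortAt (h : IsSortSite p φ r v c n) {l : ℕ} (hl : l ≤ n) :
    (sortAt (p, φ) v c).1^[l] (p v) = p^[l] (p v) :=
  iterate_eq_before_exit h.lt_path h.not_lt_exit
    (fun _ hy hyc => sortAt_fst_of_ne hy.ne' (h.path_end ▸ hyc)) hl

lemma reaches_sortAt_parent (h : IsSortSite p φ r v c n) :
    Reaches (sortAt (p, φ) v c).1 (p v) v :=
  ⟨n + 1, by rw [iterate_succ_apply', iterate_sortAt h le_rfl, h.path_end,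
    sortAt_fst_child h.child_ne]⟩

lemma reaches_sortAt (h : IsSortSite p φ r v c n) {a b : α} (hab : Reaches p a b)
    (hb : b ≤ v) : Reaches (sortAt (p, φ) v c).1 a b := by
  have hskip : Reaches (sortAt (p, φ) v c).1 v (p^[n + 1 + 1] v) :=
    ⟨1, by rw [iterate_one, sortAt_fst_self, iterate_succ_apply', iterate_succ_apply, h.path_end]⟩
  refine Reaches.of_skip (fun y hyv => ?_) hskip ?_ hab
  · rcases eq_or_ne y c with rfl | hyc
    · exact ⟨2, by simp [sortAt_fst_child h.child_ne]⟩
    · exact ⟨1, sortAt_fst_of_ne hyv hyc⟩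
  · intro l hl hln hlb
    have := h.lt_path (l - 1) (by omega)
    rw [← iterate_succ_apply, Nat.succ_eq_add_one, Nat.sub_add_cancel hl, hlb] at this
    exact hb.not_gt this

lemma sortAt_snd_child (h : IsSortSite p φ r v c n) : (sortAt (p, φ) v c).2 c = c :=
  (sortAt_snd_of_ne h.child_ne).trans h.label_child

lemma ne_of_not_sortAt_fst_lt (h : IsSortSite p φ r v c n)
    (hx : ¬ (sortAt (p, φ) v c).1 x < x) : x ≠ v ∧ x ≠ c := by
  refine ⟨?_, ?_⟩ <;> rintro rfl
  · exact hx (by rw [sortAt_fst_self]; exact h.parent_lt)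
  · exact hx (by rw [sortAt_fst_child h.child_ne]; exact h.lt_child)

lemma sortAt_parent_lt_of_reaches (h : IsSortSite p φ r v c n) {u : α}
    (hx : (sortAt (p, φ) v c).1 x < x) (hφx : (sortAt (p, φ) v c).2 x ≠ x)
    (hxu : Reaches (sortAt (p, φ) v c).1 x u) (hu : u ≠ r) :
    (sortAt (p, φ) v c).1 u < u := by
  rcases eq_or_ne x v with rfl | hxv
  · obtain ⟨_ | k, rfl⟩ := hxu
    · exact hx
    have hpc : (sortAt (p, φ) x c).1 x ∈ Set.Iio x := hx
    obtain ⟨-, hu_lt⟩ := Reaches.of_eqOn h.mapsTo_Iio h.eqOn_Iio hpc ⟨k, rfl⟩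
    rw [iterate_succ_apply] at hu ⊢
    rw [h.eqOn_Iio hu_lt]
    exact h.parent_lt_of_lt hu_lt hu
  have hxc : x ≠ c := by rintro rfl; exact hφx h.sortAt_snd_child
  rw [sortAt_fst_of_ne hxv hxc] at hx
  rw [sortAt_snd_of_ne hxv] at hφx
  obtain ⟨hxu, hu_lt⟩ := hxu.of_eqOn h.mapsTo_Iio h.eqOn_Iio (h.lt_of_moved hx hφx)
  rw [h.eqOn_Iio hu_lt]
  exact h.labelling.parent_lt_of_reaches x hx hφx u hxu hu

lemma sortAt_lt_of_lt_parent (h : IsSortSite p φ r v c n) {u : α}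
    (hx : x < (sortAt (p, φ) v c).1 x) (hu : (sortAt (p, φ) v c).1 u < u)
    (hφu : (sortAt (p, φ) v c).2 u ≠ u) : u < x := by
  obtain ⟨hxv, hxc⟩ := h.ne_of_not_sortAt_fst_lt hx.not_gt
  rw [sortAt_fst_of_ne hxv hxc] at hx
  rcases eq_or_ne u v with rfl | huv
  · exact (h.le_of_lt_parent x hx).lt_of_ne hxv.symm
  have huc : u ≠ c := by rintro rfl; exact hφu h.sortAt_snd_child
  rw [sortAt_fst_of_ne huv huc] at hu
  rw [sortAt_snd_of_ne huv] at hφu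
  exact h.labelling.lt_of_lt_parent x u hx hu hφu

lemma isLabelling_sortAt (h : IsSortSite p φ r v c n) :
    IsLabelling (sortAt (p, φ) v c).1 (sortAt (p, φ) v c).2 r where
  root_le := h.labelling.root_le
  map_root :=
    (sortAt_fst_of_ne h.root_lt.ne (h.root_lt.trans h.lt_child).ne).trans h.labelling.map_root
  reaches_root x := h.reaches_sortAt (h.labelling.reaches_root x) (h.labelling.root_le v)
  label_eq_of_not_lt x hx := by
    obtain ⟨hxv, hxc⟩ := h.ne_of_not_sortAt_fst_lt hx
    rw [sortAt_fst_of_ne hxv hxc] at hx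
    exact (sortAt_snd_of_ne hxv).trans (h.labelling.label_eq_of_not_lt x hx)
  reaches_label x hx := by
    rcases eq_or_ne x v with rfl | hxv
    · rw [sortAt_snd_self]; exact h.reaches_sortAt_parent
    rcases eq_or_ne x c with rfl | hxc
    · rw [h.sortAt_snd_child]; exact Reaches.refl _ _
    rw [sortAt_fst_of_ne hxv hxc] at hx
    rw [sortAt_snd_of_ne hxv]
    by_cases hφx : φ x = x
    · exact ⟨0, hφx⟩
    · exact h.reaches_sortAt (h.labelling.reaches_label x hx) (h.lt_of_moved hx hφx).le
  le_label x hx := by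
    rcases eq_or_ne x v with rfl | hxv
    · rw [sortAt_snd_self]; exact h.lt_parent.le
    rcases eq_or_ne x c with rfl | hxc
    · rw [h.sortAt_snd_child]
    rw [sortAt_fst_of_ne hxv hxc] at hx
    rw [sortAt_snd_of_ne hxv]
    exact h.labelling.le_label x hx
  parent_lt_of_reaches _ hx hφx _ := h.sortAt_parent_lt_of_reaches hx hφx
  lt_of_lt_parent _ _ := h.sortAt_lt_of_lt_parent

lemma isUnsortSite_sortAt (h : IsSortSite p φ r v c n) :
    IsUnsortSite (sortAt (p, φ) v c).1 (sortAt (p, φ) v c).2 r v c n where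
  labelling := h.isLabelling_sortAt
  parent_lt := by rw [sortAt_fst_self]; exact h.parent_lt
  lt_label := by rw [sortAt_snd_self]; exact h.lt_parent
  le_of_moved x hx hφx := by
    rcases eq_or_ne x v with rfl | hxv
    · exact le_rfl
    have hxc : x ≠ c := by rintro rfl; exact hφx h.sortAt_snd_child
    rw [sortAt_fst_of_ne hxv hxc] at hx
    rw [sortAt_snd_of_ne hxv] at hφx
    exact (h.lt_of_moved hx hφx).le
  lt_path l hl := by rw [sortAt_snd_self, h.iterate_sortAt hl]; exact h.lt_path l hl
  path_end := by rw [sortAt_snd_self, h.iterate_sortAt le_rfl, h.path_end]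
  parent_child := sortAt_fst_child h.child_ne

end IsSortSite

lemma IsUnsortSite.isSortSite_unsortAt {p φ : α → α} {r v c : α} {n : ℕ}
    (h : IsUnsortSite p φ r v c n) :
    IsSortSite (unsortAt (p, φ) v c).1 (unsortAt (p, φ) v c).2 r v c n where
  labelling := h.isLabelling_unsortAt
  lt_parent := by rw [unsortAt_fst_self]; exact h.lt_label
  le_of_lt_parent x hx := by
    rcases eq_or_ne x v with rfl | hxv
    · exact le_rfl
    rcases eq_or_ne x c with rfl | hxc
    · rw [unsortAt_fst_child h.child_ne] at hx
      exact absurd (hx.trans h.parent_lt) h.lt_child.not_gt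
    rw [unsortAt_fst_of_ne hxv hxc] at hx
    exact (h.lt_of_lt_parent hx).le
  lt_path l hl := by rw [unsortAt_fst_self, h.iterate_unsortAt hl]; exact h.lt_path l hl
  path_end := by rw [unsortAt_fst_self, h.iterate_unsortAt le_rfl, h.path_end]
  parent_lt := by rw [unsortAt_fst_child h.child_ne]; exact h.parent_lt

section Fintype

variable [Fintype α]

def increasingVertices (p : α → α) : Finset α := univ.filter fun x => p x < x

def decreasingVertices (p : α → α) : Finset α := univ.filter fun x => x < p x

def movedVertices (p φ : α → α) : Finset α := univ.filter fun x => p x < x ∧ φ x ≠ x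

def weight {M : Type*} [CommMonoid M] (X : α → M) (Y : α → α → M) (t : (α → α) × (α → α)) : M :=
  (∏ x ∈ increasingVertices t.1, X (t.1 x) * Y x (t.2 x)) *
    ∏ x ∈ decreasingVertices t.1, X x * Y x (t.1 x)

noncomputable def unsortMap (t : (α → α) × (α → α)) : (α → α) × (α → α) :=
  if h : (movedVertices t.1 t.2).Nonempty then
    unsortAt t (max' _ h) (lastAbove t.1 (max' _ h) (t.2 (max' _ h)))
  else t

noncomputable def sortMap (t : (α → α) × (α → α)) : (α → α) × (α → α) :=
  if h : (decreasingVertices t.1).Nonempty then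
    sortAt t (min' _ h) (lastAbove t.1 (min' _ h) (t.1 (min' _ h)))
  else t

variable {p φ : α → α} {r v c : α} {n : ℕ}

namespace IsUnsortSite

lemma mem_movedVertices (h : IsUnsortSite p φ r v c n) : v ∈ movedVertices p φ := by
  simp [movedVertices, h.parent_lt, h.lt_label.ne']

lemma unsortMap_eq (h : IsUnsortSite p φ r v c n) : unsortMap (p, φ) = unsortAt (p, φ) v c := by
  have hmax : (movedVertices p φ).max' ⟨v, h.mem_movedVertices⟩ = v := by
    refine le_antisymm (max'_le _ _ _ fun x hx => ?_) (le_max' _ _ h.mem_movedVertices)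
    simp only [movedVertices, mem_filter, mem_univ, true_and] at hx
    exact h.le_of_moved x hx.1 hx.2
  have hc : lastAbove p v (φ v) = c := by
    rw [lastAbove_eq h.lt_path h.not_lt_exit, h.path_end]
  simp only [unsortMap, hmax, hc]
  exact dif_pos ⟨v, h.mem_movedVertices⟩

lemma increasingVertices_unsortAt (h : IsUnsortSite p φ r v c n) :
    increasingVertices (unsortAt (p, φ) v c).1 = (increasingVertices p).erase v := by
  ext x
  simp only [increasingVertices, mem_filter, mem_univ, true_and, mem_erase]
  rcases eq_or_ne x v with rfl | hxv
  · simpa using h.lt_label.not_gt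
  rcases eq_or_ne x c with rfl | hxc
  · simp [unsortAt_fst_child h.child_ne, h.parent_child, h.lt_child, h.child_ne,
      h.parent_lt.trans h.lt_child]
  · rw [unsortAt_fst_of_ne hxv hxc]
    simp [hxv]

lemma decreasingVertices_unsortAt (h : IsUnsortSite p φ r v c n) :
    decreasingVertices (unsortAt (p, φ) v c).1 = insert v (decreasingVertices p) := by
  ext x
  simp only [decreasingVertices, mem_filter, mem_univ, true_and, mem_insert]
  rcases eq_or_ne x v with rfl | hxv
  · simpa using h.lt_label
  rcases eq_or_ne x c with rfl | hxc
  · simp [unsortAt_fst_child h.child_ne, h.parent_child, h.child_ne, h.lt_child.not_gt,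
      (h.parent_lt.trans h.lt_child).not_gt]
  · rw [unsortAt_fst_of_ne hxv hxc]
    simp [hxv]

lemma movedVertices_unsortAt (h : IsUnsortSite p φ r v c n) :
    movedVertices (unsortAt (p, φ) v c).1 (unsortAt (p, φ) v c).2 =
      (movedVertices p φ).erase v := by
  ext x
  simp only [movedVertices, mem_filter, mem_univ, true_and, mem_erase]
  rcases eq_or_ne x v with rfl | hxv
  · simp
  rcases eq_or_ne x c with rfl | hxc
  · simp [h.unsortAt_snd_child, h.label_child]
  · rw [unsortAt_fst_of_ne hxv hxc, unsortAt_snd_of_ne hxv]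
    simp [hxv]

lemma weight_unsortAt (h : IsUnsortSite p φ r v c n) {M : Type*} [CommMonoid M] (X : α → M)
    (Y : α → α → M) : weight X Y (unsortAt (p, φ) v c) = weight X Y (p, φ) := by
  have hv : v ∈ increasingVertices p := by simpa [increasingVertices] using h.parent_lt
  have hc : c ∈ (increasingVertices p).erase v := by
    simpa [increasingVertices, h.child_ne, h.parent_child] using h.lt_child
  have hv_dec : v ∉ decreasingVertices p := by simpa [decreasingVertices] using h.parent_lt.le
  set R := ∏ x ∈ ((increasingVertices p).erase v).erase c, X (p x) * Y x (φ x)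
  have hinc : ∏ x ∈ (increasingVertices p).erase v,
      X ((unsortAt (p, φ) v c).1 x) * Y x ((unsortAt (p, φ) v c).2 x) = X (p v) * Y c c * R := by
    rw [← mul_prod_erase _ _ hc, unsortAt_fst_child h.child_ne, h.unsortAt_snd_child]
    refine congrArg _ (prod_congr rfl fun x hx => ?_)
    obtain ⟨hxc, hxv, -⟩ := by simpa using hx
    rw [unsortAt_fst_of_ne hxv hxc, unsortAt_snd_of_ne hxv]
  have hdec : ∏ x ∈ decreasingVertices p, X x * Y x ((unsortAt (p, φ) v c).1 x) =
      ∏ x ∈ decreasingVertices p, X x * Y x (p x) := by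
    refine prod_congr rfl fun x hx => ?_
    have hx' : x < p x := by simpa [decreasingVertices] using hx
    have hvx : v < x := h.lt_of_lt_parent hx'
    have hxc : x ≠ c := by rintro rfl; exact (h.parent_child ▸ hx').not_gt hvx
    rw [unsortAt_fst_of_ne hvx.ne' hxc]
  have hinc₀ : ∏ x ∈ increasingVertices p, X (p x) * Y x (φ x) =
      X (p v) * Y v (φ v) * (X v * Y c c * R) := by
    rw [← mul_prod_erase _ _ hv, ← mul_prod_erase _ _ hc, h.parent_child, h.label_child]
  simp only [weight]
  rw [h.increasingVertices_unsortAt, h.decreasingVertices_unsortAt, prod_insert hv_dec, hinc,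
    hdec, hinc₀, unsortAt_fst_self]
  ac_rfl

end IsUnsortSite

lemma IsSortSite.sortMap_eq (h : IsSortSite p φ r v c n) : sortMap (p, φ) = sortAt (p, φ) v c := by
  have hv : v ∈ decreasingVertices p := by simpa [decreasingVertices] using h.lt_parent
  have hmin : (decreasingVertices p).min' ⟨v, hv⟩ = v := by
    refine le_antisymm (min'_le _ _ hv) (le_min' _ _ _ fun x hx => ?_)
    exact h.le_of_lt_parent x (by simpa [decreasingVertices] using hx)
  have hc : lastAbove p v (p v) = c := by
    rw [lastAbove_eq h.lt_path h.not_lt_exit, h.path_end]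
  simp only [sortMap, hmin, hc]
  exact dif_pos ⟨v, hv⟩

namespace IsLabelling

lemma exists_isUnsortSite (h : IsLabelling p φ r) (hne : (movedVertices p φ).Nonempty) :
    ∃ v c n, IsUnsortSite p φ r v c n := by
  obtain ⟨v, hv, hvmax⟩ := exists_max_image _ id hne
  simp only [movedVertices, mem_filter, mem_univ, true_and, id] at hv hvmax
  have hlt : v < φ v := (h.le_label v hv.1).lt_of_ne hv.2.symm
  obtain ⟨k, hk⟩ := h.reaches_label v hv.1
  obtain ⟨n, hpath, hexit⟩ := exists_forall_le_lt_iterate hlt (by rw [hk]; exact lt_irrefl v)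
  refine ⟨v, p^[n] (φ v), n, h, hv.1, hlt, fun x hx hφx => hvmax x ⟨hx, hφx⟩, hpath, rfl, ?_⟩
  rw [← iterate_succ_apply' p n]
  refine le_antisymm (not_lt.1 hexit) (not_lt.1 fun hbelow => ?_)
  -- once below `v`, the path from `φ v` can never climb back to `v`
  have hkn : n + 1 ≤ k := not_lt.1 fun hkn => (hpath k (by omega)).ne' hk
  have hstay := (mapsTo_Iio_of_forall_lt fun x hx =>
    (h.lt_of_lt_parent x v hx hv.1 hv.2).le).iterate (k - (n + 1)) hbelow
  rw [Set.mem_Iio, ← iterate_add_apply, Nat.sub_add_cancel hkn, hk] at hstay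
  exact lt_irrefl v hstay

lemma exists_isSortSite (h : IsLabelling p φ r) (hne : (decreasingVertices p).Nonempty) :
    ∃ v c n, IsSortSite p φ r v c n := by
  obtain ⟨v, hv, hvmin⟩ := exists_min_image _ id hne
  simp only [decreasingVertices, mem_filter, mem_univ, true_and, id] at hv hvmin
  obtain ⟨k, hk⟩ := h.reaches_root (p v)
  obtain ⟨n, hpath, hexit⟩ :=
    exists_forall_le_lt_iterate hv (by rw [hk]; exact (h.root_le v).not_gt)
  refine ⟨v, p^[n] (p v), n, h, hv, hvmin, hpath, rfl, ?_⟩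
  rw [← iterate_succ_apply' p n]
  refine (not_lt.1 hexit).lt_of_ne fun hcycle => ?_
  have hvr : v = r := h.eq_root_of_iterate_eq_self (d := n + 2) (by omega)
    (by rw [iterate_succ_apply]; exact hcycle)
  exact hv.ne' (hvr ▸ h.map_root)

end IsLabelling

def labellingSet (r : α) (i j : ℕ) : Set ((α → α) × (α → α)) :=
  {t | IsLabelling t.1 t.2 r ∧ (decreasingVertices t.1).card = i ∧
    (movedVertices t.1 t.2).card = j}

variable {t : (α → α) × (α → α)} {i j : ℕ}

lemma exists_isUnsortSite_of_mem (ht : (p, φ) ∈ labellingSet r i (j + 1)) :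
    ∃ v c n, IsUnsortSite p φ r v c n :=
  ht.1.exists_isUnsortSite (card_pos.1 (ht.2.2 ▸ j.succ_pos))

lemma exists_isSortSite_of_mem (ht : (p, φ) ∈ labellingSet r (i + 1) j) :
    ∃ v c n, IsSortSite p φ r v c n :=
  ht.1.exists_isSortSite (card_pos.1 (ht.2.1 ▸ i.succ_pos))

lemma unsortMap_mem (ht : t ∈ labellingSet r i (j + 1)) :
    unsortMap t ∈ labellingSet r (i + 1) j := by
  obtain ⟨p, φ⟩ := t
  obtain ⟨v, c, n, h⟩ := exists_isUnsortSite_of_mem ht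
  have hv_dec : v ∉ decreasingVertices p := by
    simpa [decreasingVertices] using h.parent_lt.le
  refine h.unsortMap_eq ▸ ⟨h.isLabelling_unsortAt, ?_, ?_⟩
  · rw [h.decreasingVertices_unsortAt, card_insert_of_notMem hv_dec, ht.2.1]
  · rw [h.movedVertices_unsortAt, card_erase_of_mem h.mem_movedVertices, ht.2.2,
      Nat.add_sub_cancel]

lemma sortMap_unsortMap (ht : t ∈ labellingSet r i (j + 1)) : sortMap (unsortMap t) = t := by
  obtain ⟨p, φ⟩ := t
  obtain ⟨v, c, n, h⟩ := exists_isUnsortSite_of_mem ht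
  rw [h.unsortMap_eq]
  exact h.isSortSite_unsortAt.sortMap_eq.trans (sortAt_unsortAt h.child_ne h.parent_child)

lemma weight_unsortMap (ht : t ∈ labellingSet r i (j + 1)) {M : Type*} [CommMonoid M]
    (X : α → M) (Y : α → α → M) : weight X Y (unsortMap t) = weight X Y t := by
  obtain ⟨p, φ⟩ := t
  obtain ⟨v, c, n, h⟩ := exists_isUnsortSite_of_mem ht
  rw [h.unsortMap_eq, h.weight_unsortAt]

lemma unsortMap_sortMap (ht : t ∈ labellingSet r (i + 1) j) : unsortMap (sortMap t) = t := by
  obtain ⟨p, φ⟩ := t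
  obtain ⟨v, c, n, h⟩ := exists_isSortSite_of_mem ht
  rw [h.sortMap_eq]
  exact h.isUnsortSite_sortAt.unsortMap_eq.trans (unsortAt_sortAt h.child_ne h.label_self)

lemma sortMap_mem (ht : t ∈ labellingSet r (i + 1) j) :
    sortMap t ∈ labellingSet r i (j + 1) := by
  obtain ⟨p, φ⟩ := t
  obtain ⟨v, c, n, h⟩ := exists_isSortSite_of_mem ht
  have hs := h.isUnsortSite_sortAt
  have hround : unsortAt (sortAt (p, φ) v c) v c = (p, φ) := unsortAt_sortAt h.child_ne h.label_self
  have hv_dec : v ∉ decreasingVertices (sortAt (p, φ) v c).1 := by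
    simpa [decreasingVertices] using hs.parent_lt.le
  refine h.sortMap_eq ▸ ⟨h.isLabelling_sortAt, ?_, ?_⟩
  · have hcard := congrArg card hs.decreasingVertices_unsortAt
    rw [hround, card_insert_of_notMem hv_dec, ht.2.1] at hcard
    omega
  · have hcard := congrArg card hs.movedVertices_unsortAt
    rw [hround, card_erase_of_mem hs.mem_movedVertices, ht.2.2] at hcard
    have := card_pos.2 ⟨v, hs.mem_movedVertices⟩
    omega

noncomputable def unsortEquiv (r : α) (i j : ℕ) :
    labellingSet r i (j + 1) ≃ labellingSet r (i + 1) j where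
  toFun t := ⟨unsortMap t, unsortMap_mem t.2⟩
  invFun t := ⟨sortMap t, sortMap_mem t.2⟩
  left_inv t := Subtype.ext (sortMap_unsortMap t.2)
  right_inv t := Subtype.ext (unsortMap_sortMap t.2)

end Fintype

end LinearOrder

section Lset

variable {A : Finset ℕ}

def rootOf (hA : A.Nonempty) : A := ⟨A.min' hA, A.min'_mem hA⟩

lemma coe_eq_fmin_iff (hA : A.Nonempty) {x : A} : (x : ℕ) = fmin A ↔ x = rootOf hA := by
  rw [Subtype.ext_iff, fmin, ← Finset.coe_min' hA]
  rfl

lemma mem_hookS_iff {p : A → A} {u v : A} : u ∈ hookS p v ↔ Reaches p u v := by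
  simp [hookS, Reaches]

lemma mem_Lset_iff (hA : A.Nonempty) {i j : ℕ} {t : (A → A) × (A → A)} :
    t ∈ Lset A i j ↔ t ∈ labellingSet (rootOf hA) i j := by
  simp only [Lset, Finset.mem_filter, mem_univ, true_and, coe_eq_fmin_iff hA,
    mem_hookS_iff, ne_eq, labellingSet, Set.mem_ofPred_eq]
  constructor
  · rintro ⟨h1, h2, h3, h4, h5, h6, h7, h8⟩
    exact ⟨⟨fun x => A.min'_le _ x.2, h1 _ rfl, h2, h3, fun x hx => (h4 x hx).1,
      fun x hx => (h4 x hx).2, h5, h6⟩, h7, h8⟩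
  · rintro ⟨h, h7, h8⟩
    exact ⟨fun x hx => hx ▸ h.map_root, h.reaches_root, h.label_eq_of_not_lt,
      fun x hx => ⟨h.reaches_label x hx, h.le_label x hx⟩, h.parent_lt_of_reaches,
      h.lt_of_lt_parent, h7, h8⟩

lemma omegaL_eq_weight (t : (A → A) × (A → A)) :
    omegaL A t = weight (fun a : A => X (Sum.inl (a : ℕ)))
      (fun a b : A => X (Sum.inr ((a : ℕ), (b : ℕ)))) t :=
  rfl

end Lset

end Unsorting

theorem unsorting_bijection_general (A : Finset ℕ) (hA : A.Nonempty) (i j : ℕ) (hj : 1 ≤ j) :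
    ∃ e : {t // t ∈ Lset A i j} ≃ {t // t ∈ Lset A (i + 1) (j - 1)},
      ∀ t : {t // t ∈ Lset A i j}, omegaL A t.1 = omegaL A (e t).1 := by
  obtain ⟨j, rfl⟩ : ∃ j', j = j' + 1 := ⟨j - 1, by omega⟩
  rw [Nat.add_sub_cancel]
  refine ⟨(Equiv.subtypeEquivRight fun _ => Unsorting.mem_Lset_iff hA).trans
    ((Unsorting.unsortEquiv _ i j).trans
      (Equiv.subtypeEquivRight fun _ => Unsorting.mem_Lset_iff hA).symm), fun t => ?_⟩
  rw [Unsorting.omegaL_eq_weight, Unsorting.omegaL_eq_weight]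
  exact (Unsorting.weight_unsortMap ((Unsorting.mem_Lset_iff hA).1 t.2) _ _).symm

/-- Unsorting bijection (Theorem 2.1): for `j ≥ 1` there is a weight-preserving bijection
between `L_{i,j}(A)` and `L_{i+1,j-1}(A)`. -/
theorem unsorting_bijection (A : Finset ℕ) (hA : A.Nonempty) (hpos : ∀ i ∈ A, 0 < i)
    (i j : ℕ) (hj : 1 ≤ j) :
    ∃ e : {t // t ∈ Lset A i j} ≃ {t // t ∈ Lset A (i + 1) (j - 1)},
      ∀ t : {t // t ∈ Lset A i j}, omegaL A t.1 = omegaL A (e t).1 :=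
  unsorting_bijection_general A hA i j hj
end
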